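/- arXiv:1501.05284 — 12 statements merged into one kernel-verified Lean document; each statement's English description precedes it below -/
import Mathlib

section
/- If κ is an infinite cardinal and C is a well-ordered chain (under refinement) of partitions of κ with order type α, then the cardinality of α is at most κ. -/
/-!
Strict refinement `c < d` of partitions means the graph of `d`, a subset of `κ × κ`, strictly
contains the graph of `c`. In a well-ordered chain, every element `c` other than the maximum has
an immediate successor `c⁺`; pick a pair in the graph of `c⁺` but not of `c`. That pair lies in
the graph of every `d > c`, so distinct elements get distinct pairs, and the chain has at most
`|κ × κ| + 1 = κ` elements.
-/

open Cardinal Order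

theorem Setoid.strictMono_graph {α : Type*} :
    StrictMono fun s : Setoid α => {p : α × α | s p.1 p.2} :=
  fun _ _ hst => ⟨fun _ hp => hst.le hp, fun hts => hst.not_ge fun x y h => hts (a := (x, y)) h⟩

section

variable {β γ : Type*} [LinearOrder β] [SuccOrder β] {g : β → Set γ}

theorem StrictMono.injective_of_mem_succ_diff (hg : StrictMono g)
    {f : {b : β | ¬IsMax b} → γ} (hf : ∀ b, f b ∈ g (succ b.1) \ g b.1) :
    Function.Injective f := by
  have hne_of_lt (b c : {b : β | ¬IsMax b}) (hbc : b.1 < c.1) : f b ≠ f c := fun hfbc =>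
    (hf c).2 (hfbc ▸ hg.monotone (succ_le_of_lt hbc) (hf b).1)
  intro b c hbc
  rcases lt_trichotomy b.1 c.1 with h | h | h
  · exact absurd hbc (hne_of_lt b c h)
  · exact Subtype.ext h
  · exact absurd hbc.symm (hne_of_lt c b h)

theorem StrictMono.exists_injective_of_not_isMax (hg : StrictMono g) :
    ∃ f : {b : β | ¬IsMax b} → γ, Function.Injective f := by
  have hdiff (b : {b : β | ¬IsMax b}) : (g (succ b.1) \ g b.1).Nonempty :=
    Set.nonempty_of_ssubset (hg (lt_succ_of_not_isMax b.2))
  choose f hf using hdiff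
  exact ⟨f, hg.injective_of_mem_succ_diff hf⟩

end

theorem Cardinal.mk_le_add_one_of_strictMono {β γ : Type u} [LinearOrder β] [WellFoundedLT β]
    {g : β → Set γ} (hg : StrictMono g) : #β ≤ #γ + 1 := by
  let := SuccOrder.ofLinearWellFoundedLT β
  obtain ⟨f, hf⟩ := hg.exists_injective_of_not_isMax
  have hmax : #({b : β | ¬IsMax b}ᶜ : Set β) ≤ 1 :=
    mk_le_one_iff_set_subsingleton.2 <| (Set.subsingleton_isTop β).anti
      fun b hb => isTop_iff_isMax.2 (not_not.1 hb)
  calc #β = #{b : β | ¬IsMax b} + #({b : β | ¬IsMax b}ᶜ : Set β) := (mk_sum_compl _).symm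
    _ ≤ #γ + 1 := add_le_add (mk_le_of_injective hf) hmax

theorem stmt_0_general {α : Type u} (hα : Cardinal.aleph0 ≤ Cardinal.mk α)
    (C : Set (Setoid α))
    (hwo : IsWellOrder C (· < ·)) :
    (@Ordinal.type C (· < ·) hwo).card ≤ Cardinal.mk α := by
  -- this linear order has the refinement order `<` of `C` as its strict order
  let := IsWellOrder.linearOrder (α := C) (· < ·)
  have : WellFoundedLT C := ⟨hwo.wf⟩
  have hg : StrictMono fun c : C => {p : α × α | c.1 p.1 p.2} :=
    fun c d h => Setoid.strictMono_graph (show c.1 < d.1 from h)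
  calc (@Ordinal.type C (· < ·) hwo).card = #C := Ordinal.card_type _
    _ ≤ #(α × α) + 1 := mk_le_add_one_of_strictMono hg
    _ = #α := by rw [mk_prod, lift_id, mul_eq_self hα, add_one_eq hα]

/-- If κ is an infinite cardinal and `C` is a well-ordered chain (under refinement)
of partitions of κ (formalized as setoids on a type `α` of cardinality κ) with order
type `o`, then `|o| ≤ κ`. -/
theorem stmt_0 {α : Type u} (hα : Cardinal.aleph0 ≤ Cardinal.mk α)
    (C : Set (Setoid α)) (hC : IsChain (· ≤ ·) C)
    (hwo : IsWellOrder C (· < ·)) :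
    (@Ordinal.type C (· < ·) hwo).card ≤ Cardinal.mk α :=
  stmt_0_general hα C hwo
end

section
/- Let κ be an infinite cardinal. Every maximal chain in the partition lattice of κ that is well-ordered of order type α+1 satisfies |α| ≥ cf(κ), the cofinality of κ. -/
/-!
Let `c` be the least element of the chain having an equivalence class of size `κ` (there is one,
since `⊤` lies in the chain), and let `u` be the supremum of the chain elements below `c`. By
maximality of the chain, either `u = c` or `c` covers `u`. In the first case a class
of `c` is a union of fewer than `cf κ` classes of size `< κ`, because there are at most `|o|`
elements below `c`. In the second case `c` is obtained from `u` by merging two classes, so a class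
of `c` is a union of at most three classes of `u`. Either way every class of `c` has size `< κ`,
a contradiction.
-/

open Cardinal Set

universe u

theorem Cardinal.mk_iUnion_lt_of_lt_cof {ι α : Type u} {κ : Cardinal.{u}} (hκ : ℵ₀ ≤ κ)
    {t : ι → Set α} (hι : #ι < κ.ord.cof) (ht : ∀ i, #(t i) < κ) : #(⋃ i, t i) < κ :=
  (mk_iUnion_le t).trans_lt <|
    mul_lt_of_lt hκ (hι.trans_le (Ordinal.cof_ord_le κ)) (iSup_lt_of_lt_cof_ord hι ht)

theorem Ordinal.typein_le_of_type_eq_add_one {β : Type u} (r : β → β → Prop) [IsWellOrder β r]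
    {o : Ordinal.{u}} (h : type r = o + 1) (x : β) : typein r x ≤ o :=
  Order.lt_add_one_iff.mp (h ▸ typein_lt_type r x)

theorem IsMaxChain.mem_of_forall_le_or_le {β : Type*} [PartialOrder β] {C : Set β}
    (hC : IsMaxChain (· ≤ ·) C) {a : β} (ha : ∀ b ∈ C, a ≤ b ∨ b ≤ a) : a ∈ C :=
  (hC.2 (hC.1.insert fun b hb _ => ha b hb) (subset_insert a C)).symm ▸ mem_insert a C

theorem IsMaxChain.sSup_lt_covBy {β : Type*} [CompleteLattice β] {C : Set β}
    (hC : IsMaxChain (· ≤ ·) C) {c : β} (hc : c ∈ C)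
    (hlt : sSup {b ∈ C | b < c} < c) : sSup {b ∈ C | b < c} ⋖ c := by
  refine ⟨hlt, fun d hud hdc => ?_⟩
  have hd : d ∈ C := hC.mem_of_forall_le_or_le fun e he => by
    rcases hC.1.total hc he with hce | hec
    · exact Or.inl (hdc.le.trans hce)
    · rcases hec.lt_or_eq with hec | rfl
      · exact Or.inr ((le_sSup (show e ∈ {b ∈ C | b < c} from ⟨he, hec⟩)).trans hud.le)
      · exact Or.inl hdc.le
  exact hud.not_ge (le_sSup ⟨hd, hdc⟩)

namespace Setoid

variable {α : Type u}

def HasClassesLT (r : Setoid α) (κ : Cardinal.{u}) : Prop :=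
  ∀ z, #{w | r z w} < κ

theorem not_hasClassesLT_top [Nonempty α] : ¬ (⊤ : Setoid α).HasClassesLT #α := fun h =>
  (h (Classical.arbitrary α)).ne (by simp [Setoid.top_def])

/-- The equivalence relation obtained from `r` by merging the classes of `x` and `y`. -/
def glue (r : Setoid α) (x y : α) : Setoid α where
  r a b := r a b ∨ (r a x ∧ r y b) ∨ (r a y ∧ r x b)
  iseqv := by
    refine ⟨fun a => Or.inl (r.refl a), ?_, ?_⟩
    · rintro a b (h | ⟨h₁, h₂⟩ | ⟨h₁, h₂⟩)
      exacts [Or.inl (r.symm h), Or.inr (Or.inr ⟨r.symm h₂, r.symm h₁⟩),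
        Or.inr (Or.inl ⟨r.symm h₂, r.symm h₁⟩)]
    · rintro a b e (h | ⟨h₁, h₂⟩ | ⟨h₁, h₂⟩) (h' | ⟨h₃, h₄⟩ | ⟨h₃, h₄⟩)
      · exact Or.inl (r.trans h h')
      · exact Or.inr (Or.inl ⟨r.trans h h₃, h₄⟩)
      · exact Or.inr (Or.inr ⟨r.trans h h₃, h₄⟩)
      · exact Or.inr (Or.inl ⟨h₁, r.trans h₂ h'⟩)
      · exact Or.inl (r.trans h₁ (r.trans (r.symm (r.trans h₂ h₃)) h₄))
      · exact Or.inl (r.trans h₁ h₄)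
      · exact Or.inr (Or.inr ⟨h₁, r.trans h₂ h'⟩)
      · exact Or.inl (r.trans h₁ h₄)
      · exact Or.inl (r.trans h₁ (r.trans (r.symm (r.trans h₂ h₃)) h₄))

theorem le_glue (r : Setoid α) (x y : α) : r ≤ r.glue x y :=
  fun _ _ h => Or.inl h

theorem glue_le {r s : Setoid α} (hrs : r ≤ s) {x y : α} (hxy : s x y) : r.glue x y ≤ s := by
  rintro a b (h | ⟨h₁, h₂⟩ | ⟨h₁, h₂⟩)
  · exact hrs h
  · exact s.trans (hrs h₁) (s.trans hxy (hrs h₂))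
  · exact s.trans (hrs h₁) (s.trans (s.symm hxy) (hrs h₂))

theorem exists_eq_glue_of_covBy {r s : Setoid α} (h : r ⋖ s) : ∃ x y, s = r.glue x y := by
  obtain ⟨x, y, hs, hr⟩ : ∃ x y, s x y ∧ ¬ r x y := by
    simpa [Setoid.le_def] using h.lt.not_ge
  refine ⟨x, y, ((h.eq_or_eq (r.le_glue x y) (glue_le h.le hs)).resolve_left fun he => hr ?_).symm⟩
  exact he ▸ Or.inr (Or.inl ⟨r.refl x, r.refl y⟩)

theorem HasClassesLT.glue {r : Setoid α} {κ : Cardinal.{u}} (hκ : ℵ₀ ≤ κ) (hr : r.HasClassesLT κ)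
    (x y : α) : (r.glue x y).HasClassesLT κ := by
  intro z
  have hsub : {w | r.glue x y z w} ⊆ ({w | r z w} ∪ {w | r y w}) ∪ {w | r x w} := by
    rintro w (h | ⟨-, h⟩ | ⟨-, h⟩)
    exacts [Or.inl (Or.inl h), Or.inl (Or.inr h), Or.inr h]
  calc #{w | r.glue x y z w} ≤ #{w | r z w} + #{w | r y w} + #{w | r x w} :=
        (mk_le_mk_of_subset hsub).trans <|
          (mk_union_le _ _).trans (add_le_add_left (mk_union_le _ _) _)
    _ < κ := add_lt_of_lt hκ (add_lt_of_lt hκ (hr z) (hr y)) (hr x)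

theorem sSup_rel_iff_of_isChain {S : Set (Setoid α)} (hS : IsChain (· ≤ ·) S) (hne : S.Nonempty)
    {a b : α} : sSup S a b ↔ ∃ r ∈ S, r a b := by
  refine ⟨fun h => ?_, fun ⟨r, hr, h⟩ => le_sSup hr h⟩
  rw [sSup_eq_eqvGen] at h
  induction h with
  | rel a b h => exact h
  | refl a => exact ⟨hne.some, hne.some_mem, hne.some.refl a⟩
  | symm a b _ ih =>
    obtain ⟨r, hr, h⟩ := ih
    exact ⟨r, hr, r.symm h⟩
  | trans a b e _ _ ih₁ ih₂ =>
    obtain ⟨r, hr, h₁⟩ := ih₁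
    obtain ⟨s, hs, h₂⟩ := ih₂
    rcases hS.total hr hs with hrs | hsr
    · exact ⟨s, hs, s.trans (hrs h₁) h₂⟩
    · exact ⟨r, hr, r.trans h₁ (hsr h₂)⟩

theorem hasClassesLT_sSup_of_isChain {S : Set (Setoid α)} {κ : Cardinal.{u}} (hκ : ℵ₀ ≤ κ)
    (hS : IsChain (· ≤ ·) S) (hSκ : #S < κ.ord.cof) (hsmall : ∀ r ∈ S, r.HasClassesLT κ) :
    (sSup S).HasClassesLT κ := by
  intro z
  rcases S.eq_empty_or_nonempty with rfl | hne
  · have hz : {w | (sSup ∅ : Setoid α) z w} = {z} := by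
      ext w
      rw [sSup_empty]
      simp [eq_comm]
    rw [hz, mk_singleton]
    exact one_lt_aleph0.trans_le hκ
  · have hz : {w | sSup S z w} = ⋃ r : S, {w | r.1 z w} := by
      ext w
      rw [mem_iUnion]
      exact (sSup_rel_iff_of_isChain hS hne).trans
        ⟨fun ⟨r, hr, h⟩ => ⟨⟨r, hr⟩, h⟩, fun ⟨r, h⟩ => ⟨r.1, r.2, h⟩⟩
    rw [hz]
    exact mk_iUnion_lt_of_lt_cof hκ hSκ fun r => hsmall r.1 r.2 z

end Setoid

/-- Every maximal chain in the partition lattice of an infinite cardinal κ that is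
well-ordered of order type `o + 1` satisfies `cf(κ) ≤ |o|`. -/
theorem stmt_1 {α : Type u} (hα : Cardinal.aleph0 ≤ Cardinal.mk α)
    (C : Set (Setoid α)) (hC : IsMaxChain (· ≤ ·) C)
    (hwo : IsWellOrder C (· < ·)) (o : Ordinal.{u})
    (h : @Ordinal.type C (· < ·) hwo = o + 1) :
    (Cardinal.mk α).ord.cof ≤ o.card := by
  by_contra! hcof
  have : Nonempty α := mk_ne_zero_iff.mp (aleph0_pos.trans_le hα).ne'
  obtain ⟨c, hc, hmin⟩ := hwo.wf.has_min {b : C | ¬ b.1.HasClassesLT #α}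
    ⟨⟨⊤, hC.top_mem⟩, Setoid.not_hasClassesLT_top⟩
  set S := {b ∈ C | b < c.1}
  have hS : #S < (#α).ord.cof := by
    calc #S = (Ordinal.typein (· < ·) c).card := by rw [mk_sep, Ordinal.card_typein]; rfl
      _ ≤ o.card := Ordinal.card_le_card (Ordinal.typein_le_of_type_eq_add_one _ h c)
      _ < _ := hcof
  have hu : (sSup S).HasClassesLT #α :=
    Setoid.hasClassesLT_sSup_of_isChain hα (hC.1.mono (sep_subset C _)) hS fun b hb =>
      not_not.mp fun hbig => hmin ⟨b, hb.1⟩ hbig hb.2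
  refine hc ?_
  rcases (sSup_le fun b (hb : b ∈ S) => hb.2.le : sSup S ≤ c.1).eq_or_lt with heq | hlt
  · exact heq ▸ hu
  · obtain ⟨x, y, hxy⟩ := Setoid.exists_eq_glue_of_covBy (hC.sSup_lt_covBy c.2 hlt)
    exact hxy ▸ hu.glue hα x y
end

section
/- If κ is an infinite regular cardinal, then every maximal chain in the partition lattice of κ that is well-ordered of order type α satisfies |α| = κ. -/
/-!
Order a maximal well-ordered chain `C` of partitions of `α`. Each non-top member `c` of `C` is
separated from all later members by a pair of points related in all of them but not in `c`;
these pairs are distinct, so `#C ≤ #(α × α) + 1 = #α`.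

Conversely, send each point `a` to the first member of `C` in which `{a}` is no longer a class.
By maximality, the supremum of the members of `C` below `c ∈ C` is covered by `c`, and a covering
step `r ⩿ s` of the partition lattice breaks at most two singleton classes of `r`: two broken
singletons must become `s`-related (otherwise merge only the `s`-class of one of them), and a
third one would leave room to merge only the first two. So the fibres have at most two points
and `#α ≤ #C * 2`.
-/

universe u

open Cardinal Relation

namespace Setoid

variable {α : Type*}

def Isolated (r : Setoid α) (a : α) : Prop := ∀ x, r a x → x = a

theorem isolated_iff_le_ker {r : Setoid α} {a : α} : r.Isolated a ↔ r ≤ ker (· = a) := by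
  refine ⟨fun h x y hxy => ker_def.mpr (propext ⟨?_, ?_⟩), fun h x hx => ?_⟩
  · rintro rfl
    exact h y hxy
  · rintro rfl
    exact h x (r.symm' hxy)
  · exact (ker_def.mp (h hx)) ▸ rfl

theorem Isolated.anti {r s : Setoid α} {a : α} (hrs : r ≤ s) (hs : s.Isolated a) :
    r.Isolated a :=
  fun x hx => hs x (hrs hx)

theorem isolated_sup {r s : Setoid α} {a : α} :
    (r ⊔ s).Isolated a ↔ r.Isolated a ∧ s.Isolated a := by
  simp only [isolated_iff_le_ker, sup_le_iff]

theorem isolated_sSup {S : Set (Setoid α)} {a : α} :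
    (sSup S).Isolated a ↔ ∀ r ∈ S, r.Isolated a := by
  simp only [isolated_iff_le_ker, sSup_le_iff]

theorem isolated_eqvGen {R : α → α → Prop} {c : α}
    (hR : ∀ x y, R x y → x ≠ c ∧ y ≠ c) :
    (EqvGen.setoid R).Isolated c :=
  isolated_iff_le_ker.mpr <| eqvGen_le fun x y hxy =>
    ker_def.mpr (propext (iff_of_false (hR x y hxy).1 (hR x y hxy).2))

/-- The setoid `r ⊔ EqvGen.setoid R` lies strictly between `r` and `s`. -/
theorem not_wcovBy_of_isolated {r s : Setoid α} {R : α → α → Prop}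
    (hRs : ∀ x y, R x y → s x y) {a b c : α} (hab : a ≠ b) (hR : R a b)
    (ha : r.Isolated a) (hc : r.Isolated c) (hcs : ¬ s.Isolated c)
    (hRc : ∀ x y, R x y → x ≠ c ∧ y ≠ c) : ¬ r ⩿ s := by
  intro hrs
  have hrt : r < r ⊔ EqvGen.setoid R :=
    lt_of_le_not_ge le_sup_left fun htr =>
      hab (ha b (htr (le_sup_right (a := r) (EqvGen.rel _ _ hR)))).symm
  have hts : r ⊔ EqvGen.setoid R < s :=
    lt_of_le_not_ge (sup_le hrs.le (eqvGen_le hRs)) fun hst =>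
      hcs (Isolated.anti hst (isolated_sup.mpr ⟨hc, isolated_eqvGen hRc⟩))
  exact hrs.2 hrt hts

theorem rel_of_wcovBy_of_isolated {r s : Setoid α} (h : r ⩿ s) {a b : α}
    (ha : r.Isolated a) (hb : r.Isolated b) (has : ¬ s.Isolated a) (hbs : ¬ s.Isolated b) :
    s a b := by
  by_contra hab
  obtain ⟨y, hay, hya⟩ : ∃ y, s a y ∧ y ≠ a := by simpa [Isolated] using has
  refine not_wcovBy_of_isolated (R := fun x y => s a x ∧ s a y)
    (fun x y hxy => s.trans' (s.symm' hxy.1) hxy.2) hya.symm ⟨s.refl' a, hay⟩ ha hb hbs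
    (fun x y hxy => ⟨?_, ?_⟩) h
  · rintro rfl
    exact hab hxy.1
  · rintro rfl
    exact hab hxy.2

theorem mk_isolated_not_isolated_le_two_of_wcovBy {r s : Setoid α} (h : r ⩿ s) :
    #{a | r.Isolated a ∧ ¬ s.Isolated a} ≤ 2 := by
  refine mk_le_iff_forall_finset_subset_card_le.mpr fun F hF => ?_
  by_contra! hF2
  obtain ⟨a, ha, b, hb, c, hc, hab, hac, hbc⟩ := Finset.two_lt_card.mp hF2
  obtain ⟨ha, has⟩ := hF ha
  obtain ⟨hb, hbs⟩ := hF hb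
  obtain ⟨hc, hcs⟩ := hF hc
  refine not_wcovBy_of_isolated (R := fun x y => x = a ∧ y = b) ?_ hab ⟨rfl, rfl⟩ ha hc hcs
    ?_ h
  · rintro x y ⟨rfl, rfl⟩
    exact rel_of_wcovBy_of_isolated h ha hb has hbs
  · rintro x y ⟨rfl, rfl⟩
    exact ⟨hac, hbc⟩

theorem strictMono_setOf_rel : StrictMono fun r : Setoid α => {p : α × α | r p.1 p.2} :=
  fun _ _ h => lt_of_le_not_ge (fun _ hp => h.le hp) fun hsub =>
    h.not_ge fun x y hxy => @hsub (x, y) hxy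

end Setoid

theorem IsMaxChain.mem_of_isChain_insert {α : Type*} {r : α → α → Prop} {C : Set α} {t : α}
    (hC : IsMaxChain r C) (ht : IsChain r (insert t C)) : t ∈ C :=
  hC.2 ht (Set.subset_insert t C) ▸ Set.mem_insert t C

theorem IsMaxChain.sSup_setOf_lt_wcovBy {L : Type*} [CompleteLattice L] {C : Set L}
    (hC : IsMaxChain (· ≤ ·) C) {c : L} (hc : c ∈ C) : sSup {d ∈ C | d < c} ⩿ c := by
  refine ⟨sSup_le fun d hd => hd.2.le, fun t hpt htc => ?_⟩
  have ht : t ∈ C := hC.mem_of_isChain_insert <| hC.1.insert fun d hd _ => by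
    rcases hC.1.total hd hc with hdc | hcd
    · rcases hdc.lt_or_eq with hdc | rfl
      · exact Or.inr ((le_sSup (s := {d ∈ C | d < c}) ⟨hd, hdc⟩).trans hpt.le)
      · exact Or.inl htc.le
    · exact Or.inl (htc.le.trans hcd)
  exact hpt.not_ge (le_sSup (s := {d ∈ C | d < c}) ⟨ht, htc⟩)

theorem Cardinal.mk_le_mk_add_one_of_strictMono {β X : Type u} [Preorder β]
    [IsWellOrder β (· < ·)] {f : β → Set X} (hf : StrictMono f) : #β ≤ #X + 1 := by
  have hsep : ∀ b : β, (∃ d, b < d) → ∃ x ∉ f b, ∀ d, b < d → x ∈ f d := by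
    intro b hb
    set m := wellFounded_lt.min {d | b < d} hb
    have hbm : b < m := wellFounded_lt.min_mem {d | b < d} hb
    obtain ⟨x, hxm, hxb⟩ := Set.exists_of_ssubset (hf hbm)
    refine ⟨x, hxb, fun d hbd => ?_⟩
    rcases trichotomous_of (· < ·) m d with hmd | rfl | hdm
    · exact (hf hmd).le hxm
    · exact hxm
    · exact absurd hdm (wellFounded_lt.not_lt_min {d | b < d} hbd)
  choose g hg_not hg_mem using hsep
  classical
  let e : β → Option X := fun b => if hb : ∃ d, b < d then some (g b hb) else none
  have he : ∀ b b', b < b' → e b ≠ e b' := by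
    intro b b' hbb' hee
    have hb : ∃ d, b < d := ⟨b', hbb'⟩
    by_cases hb' : ∃ d, b' < d
    · simp only [e, dif_pos hb, dif_pos hb', Option.some_inj] at hee
      exact hg_not b' hb' (hee ▸ hg_mem b hb b' hbb')
    · simp [e, dif_pos hb, dif_neg hb'] at hee
  have he_inj : Function.Injective e := fun b b' hbb' => by
    rcases trichotomous_of (· < ·) b b' with hlt | heq | hgt
    exacts [absurd hbb' (he _ _ hlt), heq, absurd hbb'.symm (he _ _ hgt)]
  exact (mk_le_of_injective he_inj).trans_eq mk_option

theorem Setoid.mk_le_mk_mul_two_of_isMaxChain {α : Type u} [Nontrivial α]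
    {C : Set (Setoid α)} (hC : IsMaxChain (· ≤ ·) C) [WellFoundedLT C] : #α ≤ #C * 2 := by
  have hne : ∀ a : α, {c : C | ¬ (c : Setoid α).Isolated a}.Nonempty := fun a => by
    obtain ⟨y, hy⟩ := exists_ne a
    exact ⟨⟨⊤, hC.top_mem⟩, fun h => hy (h y trivial)⟩
  let σ : α → C := fun a => wellFounded_lt.min _ (hne a)
  refine mk_le_mk_mul_of_mk_preimage_le σ fun c => ?_
  refine (mk_le_mk_of_subset fun a (ha : σ a = c) => ?_).trans
    (mk_isolated_not_isolated_le_two_of_wcovBy (hC.sSup_setOf_lt_wcovBy c.2))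
  subst ha
  refine ⟨isolated_sSup.mpr fun d ⟨hd, hdσ⟩ => ?_, wellFounded_lt.min_mem _ (hne a)⟩
  by_contra hda
  exact wellFounded_lt.not_lt_min {c : C | ¬ (c : Setoid α).Isolated a} (x := ⟨d, hd⟩)
    hda hdσ

theorem stmt_2_general {α : Type u} (hα : Cardinal.aleph0 ≤ Cardinal.mk α)
    (C : Set (Setoid α)) (hC : IsMaxChain (· ≤ ·) C)
    (hwo : IsWellOrder C (· < ·)) :
    (@Ordinal.type C (· < ·) hwo).card = Cardinal.mk α := by
  have : Infinite α := Cardinal.infinite_iff.mpr hα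
  have hC_le : #C ≤ #α := calc
    #C ≤ #(α × α) + 1 :=
      mk_le_mk_add_one_of_strictMono (Setoid.strictMono_setOf_rel.comp (Subtype.strictMono_coe C))
    _ = #α := by rw [mk_prod, lift_id, mul_eq_self hα, add_one_eq hα]
  have hα_le : #α ≤ #C * 2 := Setoid.mk_le_mk_mul_two_of_isMaxChain hC
  have hC_inf : ℵ₀ ≤ #C := by
    by_contra! h
    exact (hα_le.trans_lt (mul_lt_aleph0 h ofNat_lt_aleph0)).not_ge hα
  rw [Ordinal.card_type]
  exact hC_le.antisymm <| hα_le.trans_eq <|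
    Cardinal.mul_eq_left hC_inf (ofNat_lt_aleph0.le.trans hC_inf) two_ne_zero

/-- If κ is an infinite regular cardinal, every maximal well-ordered chain in the
partition lattice of κ has order type of cardinality exactly κ. -/
theorem stmt_2 {α : Type u} (hα : Cardinal.aleph0 ≤ Cardinal.mk α)
    (hreg : (Cardinal.mk α).IsRegular)
    (C : Set (Setoid α)) (hC : IsMaxChain (· ≤ ·) C)
    (hwo : IsWellOrder C (· < ·)) :
    (@Ordinal.type C (· < ·) hwo).card = Cardinal.mk α :=
  stmt_2_general hα C hC hwo
end

section
/- For any infinite cardinal κ, there exists a chain in the partition lattice of κ of cardinality strictly greater than κ. -/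
/-!
Let `λ` be the least cardinal with `κ < 2 ^ λ`, and order `λ → Bool` lexicographically along the
initial well-order of `λ`. The sequences supported below some `i < λ` number at most
`λ · sup_{i < λ} 2 ^ |i| ≤ κ`, and they are order-dense: between `f < g` sits the truncation of `g`
just after the first place where `f` and `g` differ. Hence the cuts `f ↦ {d ≤ f : d bounded}`
embed the lexicographic order, of size `2 ^ λ > κ`, into the subsets of a set of size `≤ κ`.
Every cut contains the zero sequence, so the singular partitions `diag` of the cuts are still
pairwise distinct, and they form a chain.
-/

open Cardinal Set

universe u

def diagSetoid {α : Type*} (S : Set α) : Setoid α where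
  r x y := x = y ∨ (x ∈ S ∧ y ∈ S)
  iseqv := by
    refine ⟨fun _ => Or.inl rfl, ?_, ?_⟩
    · rintro x y (rfl | ⟨hx, hy⟩)
      exacts [Or.inl rfl, Or.inr ⟨hy, hx⟩]
    · rintro x y z (rfl | ⟨hx, hy⟩) (rfl | ⟨hy', hz⟩)
      exacts [Or.inl rfl, Or.inr ⟨hy', hz⟩, Or.inr ⟨hx, hy⟩, Or.inr ⟨hx, hz⟩]

section diagSetoid

variable {α : Type*}

theorem diagSetoid_mono : Monotone (diagSetoid (α := α)) := by
  rintro S T hST x y (rfl | ⟨hx, hy⟩)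
  exacts [Or.inl rfl, Or.inr ⟨hST hx, hST hy⟩]

theorem diagSetoid_strictMonoOn (a : α) : StrictMonoOn diagSetoid {S : Set α | a ∈ S} := by
  intro S (haS : a ∈ S) T (haT : a ∈ T) hST
  refine lt_of_le_not_ge (diagSetoid_mono hST.le) fun hTS => ?_
  obtain ⟨t, htT, htS⟩ := Set.exists_of_ssubset hST
  rcases (hTS (Or.inr ⟨haT, htT⟩ : (diagSetoid T) a t) : a = t ∨ _) with rfl | ⟨-, ht⟩
  exacts [htS haS, htS ht]

end diagSetoid

theorem exists_isChain_setoid_mk_eq {L α : Type u} [LinearOrder L] {D : Set L} (hD : #D ≤ #α)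
    {e : L} (heD : e ∈ D) (he : IsBot e) (hdense : ∀ f g, f < g → ∃ d ∈ D, f < d ∧ d ≤ g) :
    ∃ C : Set (Setoid α), IsChain (· ≤ ·) C ∧ #C = #L := by
  obtain ⟨ι⟩ := (Cardinal.le_def _ _).1 hD
  let cut (f : L) : Set α := ι '' {d : D | (d : L) ≤ f}
  have hcut : StrictMono cut := by
    refine ι.injective.image_strictMono.comp fun f g hfg => ?_
    obtain ⟨d, hdD, hfd, hdg⟩ := hdense f g hfg
    refine (Set.ssubset_iff_of_subset (s := {d : D | (d : L) ≤ f}) (t := {d : D | (d : L) ≤ g})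
      fun d (hd : (d : L) ≤ f) => hd.trans hfg.le).2 ?_
    exact ⟨⟨d, hdD⟩, hdg, hfd.not_ge⟩
  have hmem (f : L) : ι ⟨e, heD⟩ ∈ cut f := ⟨⟨e, heD⟩, he f, rfl⟩
  have hmono : StrictMono (diagSetoid ∘ cut) := fun f g hfg =>
    diagSetoid_strictMonoOn (ι ⟨e, heD⟩) (hmem f) (hmem g) (hcut hfg)
  exact ⟨range (diagSetoid ∘ cut), hmono.monotone.isChain_range,
    mk_range_eq _ hmono.injective⟩

def lexVanishingFrom {β : Type*} [LE β] (i : β) : Set (Lex (β → Bool)) :=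
  {f | ∀ j, i ≤ j → ofLex f j = false}

def lexBoundedSupport (β : Type*) [LE β] : Set (Lex (β → Bool)) :=
  ⋃ i : β, lexVanishingFrom i

section lexBoundedSupport

variable {β : Type u} [LinearOrder β]

theorem mk_lexVanishingFrom_le (i : β) : #(lexVanishingFrom i) ≤ 2 ^ #(Iio i) := by
  refine (mk_le_of_injective (β := Iio i → Bool)
    (f := fun (f : lexVanishingFrom i) j => ofLex f.1 j.1) fun f g hfg => ?_).trans_eq (by simp)
  refine Subtype.ext (ofLex_inj.1 (funext fun j => ?_))
  rcases lt_or_ge j i with hj | hj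
  exacts [congrFun hfg ⟨j, hj⟩, (f.2 j hj).trans (g.2 j hj).symm]

theorem mk_lexBoundedSupport_le {κ : Cardinal.{u}} (hκ : ℵ₀ ≤ κ) (hβ : #β ≤ κ)
    (hIio : ∀ i : β, 2 ^ #(Iio i) ≤ κ) : #(lexBoundedSupport β) ≤ κ :=
  calc #(lexBoundedSupport β) ≤ #β * ⨆ i : β, #(lexVanishingFrom i) := mk_iUnion_le _
    _ ≤ κ * κ := by
        gcongr
        exact ciSup_le' fun i => (mk_lexVanishingFrom_le i).trans (hIio i)
    _ = κ := mul_eq_self hκ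

theorem isBot_toLex_const_false [WellFoundedLT β] : IsBot (toLex fun _ : β => false) :=
  fun f => Pi.toLex_monotone fun i => Bool.false_le (ofLex f i)

/-- Between `f < g` lies the truncation of `g` just after the first index where they differ. -/
theorem exists_mem_lexBoundedSupport_between [WellFoundedLT β] [NoMaxOrder β]
    {f g : Lex (β → Bool)} (hfg : f < g) : ∃ d ∈ lexBoundedSupport β, f < d ∧ d ≤ g := by
  obtain ⟨b, hfg_eq, hfg_lt⟩ := hfg
  obtain ⟨c, hbc⟩ := exists_gt b
  let d : β → Bool := fun j => if j ≤ b then ofLex g j else false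
  refine ⟨toLex d, mem_iUnion.2 ⟨c, fun j hcj => if_neg (hbc.trans_le hcj).not_ge⟩,
    ⟨b, fun j hjb => ?_, ?_⟩, Pi.toLex_monotone fun j => ?_⟩
  · exact (hfg_eq j hjb).trans (if_pos hjb.le).symm
  · exact hfg_lt.trans_eq (if_pos le_rfl).symm
  · by_cases hjb : j ≤ b
    · exact (if_pos hjb).le
    · exact (if_neg hjb).trans_le (Bool.false_le _)

end lexBoundedSupport

theorem exists_lt_two_power_forall_lt_two_power_le (κ : Cardinal.{u}) :
    ∃ lam : Cardinal.{u}, κ < 2 ^ lam ∧ ∀ μ < lam, 2 ^ μ ≤ κ := by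
  obtain ⟨lam, hlt, hmin⟩ := wellFounded_lt.has_min {c : Cardinal.{u} | κ < 2 ^ c} ⟨κ, cantor κ⟩
  exact ⟨lam, hlt, fun μ hμ => not_lt.1 fun h => hmin μ h hμ⟩

/-- For any infinite cardinal κ, there exists a chain in the partition lattice of κ
of cardinality strictly greater than κ. -/
theorem stmt_3 {α : Type u} (hα : Cardinal.aleph0 ≤ Cardinal.mk α) :
    ∃ C : Set (Setoid α), IsChain (· ≤ ·) C ∧ Cardinal.mk α < Cardinal.mk C := by
  obtain ⟨lam, hlt, hmin⟩ := exists_lt_two_power_forall_lt_two_power_le #α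
  have hlam_le : lam ≤ #α := not_lt.1 fun h => (hmin _ h).not_gt (cantor #α)
  have hlam_inf : ℵ₀ ≤ lam := not_lt.1 fun h =>
    (hlt.trans (power_lt_aleph0 (ofNat_lt_aleph0) h)).not_ge hα
  let β := lam.ord.ToType
  have hβ : #β = lam := mk_ord_toType lam
  have : NoMaxOrder β := noMaxOrder hlam_inf
  have : Nonempty β := mk_ne_zero_iff.1 (hβ ▸ (aleph0_pos.trans_le hlam_inf).ne')
  have hbot : toLex (fun _ : β => false) ∈ lexBoundedSupport β :=
    mem_iUnion.2 ⟨Classical.arbitrary β, fun _ _ => rfl⟩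
  have hcard : #(lexBoundedSupport β) ≤ #α := mk_lexBoundedSupport_le hα (hβ.trans_le hlam_le)
    fun i => hmin _ ((mk_Iio_lt i (by rw [hβ, Ordinal.type_toType])).trans_eq hβ)
  obtain ⟨C, hC, hCcard⟩ := exists_isChain_setoid_mk_eq hcard hbot isBot_toLex_const_false
    fun _ _ => exists_mem_lexBoundedSupport_between
  refine ⟨C, hC, ?_⟩
  rw [hCcard, mk_congr toLex.symm]
  simpa [hβ] using hlt
end

section
/- There is a maximal chain of cardinality 2^{ℵ₀} in the partition lattice of a countably infinite set. -/
/-!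
Enumerate ℚ by ℕ. For each real `r`, the partition of ℕ whose only non-singleton block is
the left Dedekind cut of `r` gives a strictly increasing map from ℝ to the partition lattice,
since distinct reals are separated by a rational. Its range is a chain of size `2 ^ ℵ₀`, which
extends to a maximal chain by the Hausdorff maximality principle; no chain can be larger, as
there are only `2 ^ ℵ₀` relations on ℕ.
-/

open Cardinal Set

namespace Setoid

variable {α : Type*}

/-- The paper's singular partition: `s` is its only block that may not be a singleton. -/
def collapse (s : Set α) : Setoid α where
  r x y := x = y ∨ (x ∈ s ∧ y ∈ s)
  iseqv :=
    { refl _ := .inl rfl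
      symm := fun h => h.imp Eq.symm And.symm
      trans := by
        rintro x y z (rfl | ⟨hx, hy⟩) (rfl | ⟨hy', hz⟩)
        exacts [.inl rfl, .inr ⟨hy', hz⟩, .inr ⟨hx, hy⟩, .inr ⟨hx, hz⟩] }

theorem collapse_mono : Monotone (collapse : Set α → Setoid α) := by
  rintro s t hst x y (rfl | ⟨hx, hy⟩)
  exacts [.inl rfl, .inr ⟨hst hx, hst hy⟩]

theorem collapse_le_collapse_iff {s t : Set α} (hs : s.Nontrivial) :
    collapse s ≤ collapse t ↔ s ⊆ t := by
  refine ⟨fun h x hx => ?_, fun h => collapse_mono h⟩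
  obtain ⟨y, hy, hyx⟩ := hs.exists_ne x
  rcases h (show collapse s x y from .inr ⟨hx, hy⟩) with rfl | ⟨hxt, -⟩
  exacts [absurd rfl hyx, hxt]

theorem collapse_strictMonoOn : StrictMonoOn (collapse : Set α → Setoid α) {s | s.Nontrivial} :=
  fun _ _ _ ht hst => lt_of_le_not_ge (collapse_mono hst.le)
    fun h => hst.not_subset ((collapse_le_collapse_iff ht).1 h)

theorem mk_le_two_power_aleph0 [Countable α] : #(Setoid α) ≤ 2 ^ ℵ₀ := by
  have hinj : Function.Injective fun s : Setoid α => {p : α × α | s p.1 p.2} :=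
    fun s t h => Setoid.ext fun x y => Set.ext_iff.1 h (x, y)
  calc #(Setoid α) ≤ #(Set (α × α)) := mk_le_of_injective hinj
    _ = 2 ^ #(α × α) := mk_set
    _ ≤ 2 ^ ℵ₀ := power_le_power_left two_ne_zero mk_le_aleph0

end Setoid

/-- The left Dedekind cut of `r`, transported to ℕ along an enumeration of ℚ. -/
noncomputable def dedekindCut (r : ℝ) : Set ℕ :=
  {n | ((Denumerable.eqv ℚ).symm n : ℝ) < r}

theorem mem_dedekindCut {r : ℝ} {q : ℚ} :
    Denumerable.eqv ℚ q ∈ dedekindCut r ↔ (q : ℝ) < r := by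
  simp [dedekindCut]

theorem dedekindCut_strictMono : StrictMono dedekindCut := by
  intro r r' h
  obtain ⟨q, hrq, hqr'⟩ := exists_rat_btwn h
  refine ssubset_of_subset_not_subset (fun n hn => lt_trans hn h) fun hsub => ?_
  exact hrq.not_gt (mem_dedekindCut.1 (hsub (mem_dedekindCut.2 hqr')))

theorem dedekindCut_nontrivial (r : ℝ) : (dedekindCut r).Nontrivial := by
  obtain ⟨q, hq⟩ := exists_rat_lt r
  refine ⟨_, mem_dedekindCut.2 hq, _, mem_dedekindCut.2 (?_ : ((q - 1 : ℚ) : ℝ) < r), ?_⟩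
  · push_cast; linarith
  · simpa using (sub_lt_self q one_pos).ne'

theorem collapse_dedekindCut_strictMono : StrictMono fun r => Setoid.collapse (dedekindCut r) :=
  fun _ _ h => Setoid.collapse_strictMonoOn (dedekindCut_nontrivial _) (dedekindCut_nontrivial _)
    (dedekindCut_strictMono h)

/-- There is a maximal chain of cardinality `2 ^ ℵ₀` in the partition lattice of a
countably infinite set. -/
theorem stmt_5 :
    ∃ C : Set (Setoid ℕ), IsMaxChain (· ≤ ·) C ∧
      Cardinal.mk C = 2 ^ Cardinal.aleph0 := by
  obtain ⟨C, hmax, hsub⟩ :=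
    collapse_dedekindCut_strictMono.monotone.isChain_range.exists_maxChain
  refine ⟨C, hmax, ((mk_subtype_le _).trans Setoid.mk_le_two_power_aleph0).antisymm ?_⟩
  calc 2 ^ ℵ₀ = #ℝ := mk_real.symm
    _ = #(range fun r => Setoid.collapse (dedekindCut r)) :=
      (mk_range_eq _ collapse_dedekindCut_strictMono.injective).symm
    _ ≤ #C := mk_le_mk_of_subset hsub
end

section
/- Let λ be an infinite cardinal and S = {0,1}^{ord(λ)} the set of binary sequences indexed by the initial ordinal of λ. For δ ≤ ord(λ), let K_δ be the partition of S whose blocks are the sets [f]_δ = {g ∈ S : g agrees with f on all positions < δ}. Then α < β ≤ ord(λ) implies K_β < K_α in the refinement order, so {K_δ : δ ≤ ord(λ)} is a chain with K_0 = ⊤ and K_{ord(λ)} = ⊥. -/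
/-- The keyframe partition `K_δ` on binary sequences indexed by the initial ordinal
of λ: two sequences are equivalent iff they agree on all positions of index `< δ`. -/
def keyframe (lam : Cardinal.{u}) (δ : Ordinal.{u}) : Setoid (lam.ord.ToType → Bool) where
  r f g := ∀ i : lam.ord.ToType,
    (@Ordinal.typein lam.ord.ToType (· < ·) isWellOrder_lt i : Ordinal) < δ → f i = g i
  iseqv := ⟨fun _ _ _ => rfl, fun h i hi => (h i hi).symm,
    fun h₁ h₂ i hi => (h₁ i hi).trans (h₂ i hi)⟩

namespace keyframe

open Ordinal

variable (lam : Cardinal.{u})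

theorem antitone : Antitone (keyframe lam) :=
  fun _ _ hab _ _ hfg i hi => hfg i (hi.trans_le hab)

theorem zero_eq_top : keyframe lam 0 = ⊤ :=
  Setoid.ext fun _ _ => ⟨fun _ => trivial, fun _ _ hi => absurd hi (not_lt_zero (a := _))⟩

theorem ord_eq_bot : keyframe lam lam.ord = ⊥ :=
  Setoid.ext fun _ _ => ⟨fun h => funext fun i => h i (typein_lt_self i), fun h _ _ => h ▸ rfl⟩

/-- For `a < b`, the indicator of the position of index `a` separates `K_b` from `K_a`. -/
theorem strictAntiOn_Iic_ord : StrictAntiOn (keyframe lam) (Set.Iic lam.ord) := by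
  intro a _ b (hb : b ≤ lam.ord) hab
  refine (antitone lam hab.le).lt_of_not_ge fun hle => ?_
  let x : lam.ord.ToType := ToType.mk ⟨a, hab.trans_le hb⟩
  have hx : typein (α := lam.ord.ToType) (· < ·) x = a := typein_enum _ _
  have hagree : keyframe lam a (fun _ => false) (fun i => decide (i = x)) := by
    intro i hi
    have hix : i ≠ x := by rintro rfl; exact hi.ne hx
    simp [hix]
  simpa using hle hagree x (hx ▸ hab)

theorem isChain_Iic_ord :
    IsChain (· ≤ ·) {P : Setoid (lam.ord.ToType → Bool) | ∃ δ ≤ lam.ord, P = keyframe lam δ} :=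
  (antitone lam).isChain_range.mono <| by rintro _ ⟨δ, -, rfl⟩; exact ⟨δ, rfl⟩

end keyframe

theorem stmt_9_general (lam : Cardinal.{u}) :
    (∀ a b : Ordinal.{u}, a < b → b ≤ lam.ord → keyframe lam b < keyframe lam a) ∧
    keyframe lam 0 = ⊤ ∧ keyframe lam lam.ord = ⊥ ∧
    IsChain (· ≤ ·) {P : Setoid (lam.ord.ToType → Bool) | ∃ δ ≤ lam.ord, P = keyframe lam δ} :=
  ⟨fun _ _ hab hb => keyframe.strictAntiOn_Iic_ord lam (hab.le.trans hb) hb hab,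
    keyframe.zero_eq_top lam, keyframe.ord_eq_bot lam, keyframe.isChain_Iic_ord lam⟩

/-- The keyframe partitions are strictly decreasing in the refinement order,
`K_0 = ⊤`, `K_{ord(λ)} = ⊥`, and `{K_δ : δ ≤ ord(λ)}` is a chain. -/
theorem stmt_9 (lam : Cardinal.{u}) (hlam : Cardinal.aleph0 ≤ lam) :
    (∀ a b : Ordinal.{u}, a < b → b ≤ lam.ord → keyframe lam b < keyframe lam a) ∧
    keyframe lam 0 = ⊤ ∧ keyframe lam lam.ord = ⊥ ∧
    IsChain (· ≤ ·) {P : Setoid (lam.ord.ToType → Bool) | ∃ δ ≤ lam.ord, P = keyframe lam δ} :=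
  stmt_9_general lam
end

section
/- Let κ be an infinite cardinal and P a partition of κ with P ∉ {⊥, ⊤}. Then the number of complements of P in the partition lattice of κ is at least 2^{|P|}, where |P| is the number of blocks of P. -/
/-- The set of complements of a partition `P` in the partition lattice. -/
def complements {α : Type u} (P : Setoid α) : Set (Setoid α) :=
  {Q | P ⊓ Q = ⊥ ∧ P ⊔ Q = ⊤}

/-! If `P` has infinitely many blocks, fix `a ≠ b` in one block and a transversal `s` of `P`
through `a`. For every set `S` of blocks containing the block of `b`, the partition with the two
blocks `s(S)` and `{b} ∪ s(Sᶜ)`, all other classes being singletons, is a complement of `P`: each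
of its classes meets every block at most once, and the block of `a, b` links the two big classes.
Distinct `S` give distinct complements, so there are `2^|P|` of them.

If `P` has finitely many blocks, `2^|P|` is finite, and since `α` is infinite some block is
infinite. Collapsing a single transversal yields a complement as soon as there are two blocks, and
the transversals through the different points of an infinite block give infinitely many. -/

open Cardinal

namespace Setoid

variable {α β : Type*} {P Q : Setoid α}

theorem inf_eq_bot_of_forall (h : ∀ x y, P x y → Q x y → x = y) : P ⊓ Q = ⊥ :=
  le_bot_iff.1 fun x y hxy => h x y (inf_iff_and.1 hxy).1 (inf_iff_and.1 hxy).2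

theorem sup_eq_top_of_forall_rel (c : α) (h : ∀ x, (P ⊔ Q) x c) : P ⊔ Q = ⊤ :=
  eq_top_iff.2 fun x y => (P ⊔ Q).trans (h x) ((P ⊔ Q).symm (h y))

theorem nontrivial_quotient_of_ne_top (h : P ≠ ⊤) : Nontrivial (Quotient P) := by
  obtain ⟨x, y, hxy⟩ : ∃ x y, ¬P x y := by simpa [eq_top_iff] using h
  exact ⟨⟨_, _, fun h => hxy (Quotient.exact h)⟩⟩

theorem exists_rel_ne_of_ne_bot (h : P ≠ ⊥) : ∃ a b, P a b ∧ a ≠ b := by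
  by_contra! hP
  exact h (le_bot_iff.1 fun x y => hP x y)

open Classical in
noncomputable def sectionThrough (P : Setoid α) (a : α) : Quotient P → α :=
  Function.update Quotient.out (Quotient.mk P a) a

theorem sectionThrough_apply_of_mk_eq {a : α} {i : Quotient P} (h : Quotient.mk P a = i) :
    sectionThrough P a i = a := by
  subst h
  simp [sectionThrough]

@[simp]
theorem mk_sectionThrough (a : α) (i : Quotient P) :
    Quotient.mk P (sectionThrough P a i) = i := by
  rcases eq_or_ne i (Quotient.mk P a) with rfl | hi
  · simp [sectionThrough_apply_of_mk_eq]
  · classical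
    simp [sectionThrough, Function.update_of_ne hi]

end Setoid

open Setoid

variable {α : Type*} {P : Setoid α}

section Transversal

open Classical in
noncomputable def transversalSetoid (P : Setoid α) (s : Quotient P → α) : Setoid α :=
  ker fun x => if s (Quotient.mk P x) = x then none else some x

variable {s s' : Quotient P → α}

theorem transversalSetoid_iff {x y : α} : transversalSetoid P s x y ↔
    x = y ∨ s (Quotient.mk P x) = x ∧ s (Quotient.mk P y) = y := by
  classical
  rw [transversalSetoid, ker_def]
  split_ifs with hx hy hy
  · simp [hx, hy]
  · simp only [false_iff]
    rintro (rfl | ⟨-, h⟩) <;> contradiction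
  · simp only [false_iff]
    rintro (rfl | ⟨h, -⟩) <;> contradiction
  · simp [hx]

theorem transversalSetoid_apply_section (hs : ∀ i, Quotient.mk P (s i) = i) (i j : Quotient P) :
    transversalSetoid P s (s i) (s j) :=
  transversalSetoid_iff.2 (.inr ⟨by rw [hs], by rw [hs]⟩)

theorem transversalSetoid_mem_complements (hs : ∀ i, Quotient.mk P (s i) = i) :
    transversalSetoid P s ∈ complements P := by
  refine ⟨inf_eq_bot_of_forall fun x y hxy hT => ?_, ?_⟩
  · rcases transversalSetoid_iff.1 hT with h | ⟨hx, hy⟩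
    · exact h
    · rw [← hx, ← hy, Quotient.sound hxy]
  · refine Setoid.eq_top_iff.2 fun x y => ?_
    have hP : ∀ z, P z (s (Quotient.mk P z)) := fun z => Quotient.exact (hs _).symm
    exact (P ⊔ _).trans (le_sup_left (b := transversalSetoid P s) (hP x)) <|
      (P ⊔ _).trans (le_sup_right (a := P) (transversalSetoid_apply_section hs _ _)) <|
        le_sup_left (b := transversalSetoid P s) (P.symm (hP y))

theorem transversalSetoid_injective [Nontrivial (Quotient P)]
    (hs : ∀ i, Quotient.mk P (s i) = i)
    (h : transversalSetoid P s = transversalSetoid P s') : s = s' := by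
  funext i
  obtain ⟨j, hji⟩ := exists_ne i
  have hrel := transversalSetoid_apply_section hs i j
  rw [h] at hrel
  have hne : s i ≠ s j := fun hij => hji (by rw [← hs i, ← hs j, hij])
  rcases transversalSetoid_iff.1 hrel with hij | ⟨hi, -⟩
  · exact absurd hij hne
  · rw [hs] at hi
    exact hi.symm

end Transversal

theorem aleph0_le_mk_complements [Infinite α] [Finite (Quotient P)] [Nontrivial (Quotient P)] :
    ℵ₀ ≤ #(complements P) := by
  obtain ⟨i, hfib⟩ := Finite.exists_infinite_fiber (Quotient.mk P)
  let F : Quotient.mk P ⁻¹' {i} → complements P := fun y =>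
    ⟨transversalSetoid P (sectionThrough P y), transversalSetoid_mem_complements (by simp)⟩
  have hF : Function.Injective F := by
    rintro ⟨y, hy⟩ ⟨y', hy'⟩ h
    have := congrFun (transversalSetoid_injective (by simp) (congrArg Subtype.val h)) i
    rw [sectionThrough_apply_of_mk_eq hy, sectionThrough_apply_of_mk_eq hy'] at this
    exact Subtype.ext this
  exact (aleph0_le_mk _).trans (mk_le_of_injective hF)

section Hub

open Classical in
noncomputable def hubMap (P : Setoid α) (s : Quotient P → α) (b : α) (S : Set (Quotient P))
    (x : α) : α ⊕ Bool :=
  if x = b then .inr false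
  else if s (Quotient.mk P x) = x then .inr (decide (Quotient.mk P x ∈ S)) else .inl x

variable {s : Quotient P → α} {b : α} {S : Set (Quotient P)}

theorem hubMap_self : hubMap P s b S b = .inr false := by
  simp [hubMap]

open Classical in
theorem hubMap_section (hs : ∀ i, Quotient.mk P (s i) = i) (hb : s (Quotient.mk P b) ≠ b)
    (i : Quotient P) : hubMap P s b S (s i) = .inr (decide (i ∈ S)) := by
  have hsb : s i ≠ b := fun h => hb (by rw [← h, hs])
  simp [hubMap, hsb, hs]

theorem eq_of_rel_of_hubMap_eq (hbS : Quotient.mk P b ∈ S) {x y : α} (hxy : P x y)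
    (h : hubMap P s b S x = hubMap P s b S y) : x = y := by
  have hmk : Quotient.mk P x = Quotient.mk P y := Quotient.sound hxy
  unfold hubMap at h
  split_ifs at h with hx hy hys hxs hy hys
  · exact hx.trans hy.symm
  · subst hx; simp [← hmk, hbS] at h
  · subst hy; simp [hmk, hbS] at h
  · rw [← hxs, ← hys, hmk]
  · exact Sum.inl_injective h

theorem ker_hubMap_mem_complements (hs : ∀ i, Quotient.mk P (s i) = i)
    (hb : s (Quotient.mk P b) ≠ b) (hbS : Quotient.mk P b ∈ S) :
    ker (hubMap P s b S) ∈ complements P := by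
  refine ⟨inf_eq_bot_of_forall fun _ _ => eq_of_rel_of_hubMap_eq hbS, ?_⟩
  have hP : ∀ z, P z (s (Quotient.mk P z)) := fun z => Quotient.exact (hs _).symm
  refine sup_eq_top_of_forall_rel b fun x => (P ⊔ _).trans (le_sup_left (b := ker _) (hP x)) ?_
  by_cases hx : Quotient.mk P x ∈ S
  · have hQ : ker (hubMap P s b S) (s (Quotient.mk P x)) (s (Quotient.mk P b)) := by
      simp only [ker_def, hubMap_section hs hb, hx, hbS]
    exact (P ⊔ _).trans (le_sup_right (a := P) hQ) (le_sup_left (b := ker _) (P.symm (hP b)))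
  · have hQ : ker (hubMap P s b S) (s (Quotient.mk P x)) b := by
      simp only [ker_def, hubMap_section hs hb, hubMap_self, hx, decide_false]
    exact le_sup_right (a := P) hQ

theorem ker_hubMap_rel_iff (hs : ∀ i, Quotient.mk P (s i) = i) (hb : s (Quotient.mk P b) ≠ b)
    (hbS : Quotient.mk P b ∈ S) (i : Quotient P) :
    ker (hubMap P s b S) (s i) (s (Quotient.mk P b)) ↔ i ∈ S := by
  simp [ker_def, hubMap_section hs hb, hbS]

end Hub

theorem Cardinal.two_power_le_mk_setOf_mem {ι : Type*} [Infinite ι] (i₀ : ι) :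
    2 ^ #ι ≤ #{S : Set ι // i₀ ∈ S} := by
  have hcompl : #({i₀}ᶜ : Set ι) = #ι :=
    mk_compl_of_infinite _ ((mk_singleton i₀).trans_lt (one_lt_aleph0.trans_le (aleph0_le_mk ι)))
  rw [← hcompl, ← mk_set]
  refine mk_le_of_injective (f := fun S => ⟨insert i₀ (Subtype.val '' S), Set.mem_insert _ _⟩) ?_
  intro S T h
  ext ⟨i, hi⟩
  have := congrArg (i ∈ ·.1) h
  simpa [hi, Set.mem_singleton_iff.not.1 hi] using this

theorem two_power_le_mk_complements [Infinite (Quotient P)] {a b : α} (hab : P a b)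
    (hne : a ≠ b) : 2 ^ #(Quotient P) ≤ #(complements P) := by
  let s := sectionThrough P a
  have hs : ∀ i, Quotient.mk P (s i) = i := mk_sectionThrough a
  have hb : s (Quotient.mk P b) ≠ b := by
    rwa [show s (Quotient.mk P b) = a from sectionThrough_apply_of_mk_eq (Quotient.sound hab)]
  let F : {S : Set (Quotient P) // Quotient.mk P b ∈ S} → complements P := fun S =>
    ⟨ker (hubMap P s b S), ker_hubMap_mem_complements hs hb S.2⟩
  have hF : Function.Injective F := by
    intro S T h
    ext i
    rw [← ker_hubMap_rel_iff hs hb S.2, ← ker_hubMap_rel_iff hs hb T.2]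
    exact Iff.of_eq (congrArg (fun Q : complements P => Q.1 (s i) (s (Quotient.mk P b))) h)
  exact (two_power_le_mk_setOf_mem (Quotient.mk P b)).trans (mk_le_of_injective hF)

/-- For an infinite cardinal κ and a non-trivial partition `P` of κ, the number of
complements of `P` is at least `2^|P|`, where `|P|` is the number of blocks. -/
theorem stmt_13 {α : Type u} (hα : Cardinal.aleph0 ≤ Cardinal.mk α)
    (P : Setoid α) (hbot : P ≠ ⊥) (htop : P ≠ ⊤) :
    2 ^ Cardinal.mk (Quotient P) ≤ Cardinal.mk (complements P) := by
  rcases finite_or_infinite (Quotient P) with hfin | hinf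
  · have : Infinite α := infinite_iff.2 hα
    have : Nontrivial (Quotient P) := nontrivial_quotient_of_ne_top htop
    exact (power_lt_aleph0 (natCast_lt_aleph0 (n := 2)) (lt_aleph0_of_finite _)).le.trans
      aleph0_le_mk_complements
  · obtain ⟨a, b, hab, hne⟩ := exists_rel_ne_of_ne_bot hbot
    exact two_power_le_mk_complements hab hne
end

section
/- Let κ be an infinite cardinal and P ∉ {⊥, ⊤} a partition of κ in which no block has cardinality κ. Then P has exactly 2^κ complements in the partition lattice of κ. -/
/-!
Fix a transversal `T` of `P` and `a ∈ T`, `b ∉ T` with `P a b` (they exist as `P ≠ ⊥`).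
A partition `Q` whose blocks are partial transversals of `P` is a complement as soon as its
blocks link all points of `T`. Since `κ = #T + #Tᶜ`, one of the two summands is `κ`.

If `#T = κ`, then for each `S ⊆ T \ {a}` the partition with blocks `T \ S` and `S ∪ {b}` (the
rest singletons) is a complement: `S` is linked to `T \ S` through `b ~ a`.

If `#Tᶜ = κ`, a maximal disjoint family `M` of pairs in `Tᶜ` meeting two different blocks of
`P` has size `κ`: by maximality the points of `Tᶜ` outside `⋃₀ M` lie in a single block,
which is small. For each `N ⊆ M`, the partition with blocks `T` and the pairs of `N` is a
complement.

In both cases distinct choices give distinct complements, so there are at least `2 ^ κ`; and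
there are at most `2 ^ κ` partitions of `κ` in all.
-/

universe u

open Cardinal Set

theorem Cardinal.mk_sdiff_singleton {α : Type u} {s : Set α} (hs : ℵ₀ ≤ #s) (a : α) :
    #↥(s \ {a}) = #s := by
  refine le_antisymm (mk_le_mk_of_subset sdiff_subset) ?_
  have hle : #s ≤ #↥(s \ {a}) + 1 := mk_singleton a ▸ le_mk_sdiff_add_mk s {a}
  by_cases hfin : #↥(s \ {a}) < ℵ₀
  · exact absurd (hle.trans_lt (add_lt_aleph0 hfin one_lt_aleph0)) hs.not_gt
  · rwa [add_one_eq (not_lt.1 hfin)] at hle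

theorem Cardinal.mk_pair_le {α : Type u} (x y : α) : #↥({x, y} : Set α) ≤ 2 :=
  mk_insert_le.trans (by rw [mk_singleton, one_add_one_eq_two])

namespace Setoid

variable {α : Type u}

theorem mk_le_two_pow (hα : ℵ₀ ≤ #α) : #(Setoid α) ≤ 2 ^ #α := by
  have hinj : Function.Injective fun r : Setoid α => {p : α × α | r p.1 p.2} :=
    fun r s h => Setoid.ext fun x y => Set.ext_iff.1 h (x, y)
  calc #(Setoid α) ≤ #(Set (α × α)) := mk_le_of_injective hinj
    _ = 2 ^ #α := by rw [mk_set, mk_prod, lift_id, mul_eq_self hα]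

theorem eq_top_of_forall_rel {r : Setoid α} (z : α) (h : ∀ x, r x z) : r = ⊤ :=
  eq_top_iff.2 fun x y => r.trans (h x) (r.symm (h y))

def ofPairwiseDisjoint (c : Set (Set α)) (hc : c.PairwiseDisjoint id) : Setoid α where
  r x y := x = y ∨ ∃ s ∈ c, x ∈ s ∧ y ∈ s
  iseqv.refl _ := Or.inl rfl
  iseqv.symm := by
    rintro x y (rfl | ⟨s, hs, hx, hy⟩)
    exacts [Or.inl rfl, Or.inr ⟨s, hs, hy, hx⟩]
  iseqv.trans := by
    rintro x y z (rfl | ⟨s, hs, hx, hy⟩) (rfl | ⟨t, ht, hy', hz⟩)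
    · exact Or.inl rfl
    · exact Or.inr ⟨t, ht, hy', hz⟩
    · exact Or.inr ⟨s, hs, hx, hy⟩
    · obtain rfl : s = t := hc.elim_set hs ht y hy hy'
      exact Or.inr ⟨s, hs, hx, hz⟩

theorem ofPairwiseDisjoint_rel_of_mem {c : Set (Set α)} {hc : c.PairwiseDisjoint id} {s : Set α}
    {x y : α} (hs : s ∈ c) (hx : x ∈ s) (hy : y ∈ s) : ofPairwiseDisjoint c hc x y :=
  Or.inr ⟨s, hs, hx, hy⟩

theorem inf_ofPairwiseDisjoint_eq_bot {P : Setoid α} {c : Set (Set α)}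
    (hc : c.PairwiseDisjoint id) (hP : ∀ s ∈ c, s.Pairwise fun x y => ¬ P x y) :
    P ⊓ ofPairwiseDisjoint c hc = ⊥ := by
  refine eq_bot_iff.2 fun x y hxy => ?_
  obtain ⟨hPxy, rfl | ⟨s, hs, hx, hy⟩⟩ := inf_iff_and.1 hxy
  · rfl
  · by_contra hne
    exact hP s hs hx hy hne hPxy

theorem two_pow_le_mk_complements {P : Setoid α} {ι : Type u} {s : Set ι}
    (Q : 𝒫 s → Setoid α) (hQ : ∀ S, Q S ∈ complements P)
    (hle : ∀ S S', Q S ≤ Q S' → (S : Set ι) ⊆ S') :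
    2 ^ #s ≤ #(complements P) := by
  have hinj : Function.Injective fun S => (⟨Q S, hQ S⟩ : complements P) := fun S S' h =>
    Subtype.ext <|
      (hle S S' (congrArg Subtype.val h).le).antisymm (hle S' S (congrArg Subtype.val h).ge)
  exact mk_powerset s ▸ mk_le_of_injective hinj

theorem exists_pairwiseDisjoint_nontrivial (P : Setoid α) {R : Set α} (hR : ℵ₀ ≤ #R)
    (hP : ∀ x ∈ R, #↥{y ∈ R | P x y} < #R) :
    ∃ M : Set (Set α), M.PairwiseDisjoint id ∧
      (∀ s ∈ M, s ⊆ R ∧ s.Nontrivial ∧ s.Pairwise fun x y => ¬ P x y) ∧ #R ≤ #M := by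
  let G : Set (Set α) := {s | ∃ x ∈ R, ∃ y ∈ R, ¬ P x y ∧ s = {x, y}}
  obtain ⟨M, hM⟩ := zorn_subset {M | M ⊆ G ∧ M.PairwiseDisjoint id} fun c hc hchain =>
    ⟨⋃₀ c, ⟨sUnion_subset fun s hs => (hc hs).1,
      (hchain.pairwiseDisjoint_sUnion id).2 fun s hs => (hc hs).2⟩,
      fun s hs => subset_sUnion_of_mem hs⟩
  refine ⟨M, hM.1.2, fun s hs => ?_, ?_⟩
  · obtain ⟨x, hx, y, hy, hxy, rfl⟩ := hM.1.1 hs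
    exact ⟨insert_subset hx (singleton_subset_iff.2 hy),
      nontrivial_pair fun h => hxy (h ▸ P.refl x),
      pairwise_pair.2 fun _ => ⟨hxy, fun h => hxy (P.symm h)⟩⟩
  by_contra! hlt
  have hU : #↥(⋃₀ M) < #R := by
    refine (mk_sUnion_le M).trans_lt (mul_lt_of_lt hR hlt
      ((ciSup_le' fun s => ?_).trans_lt ((natCast_lt_aleph0 (n := 2)).trans_le hR)))
    obtain ⟨x, -, y, -, -, hs⟩ := hM.1.1 s.2
    exact hs ▸ mk_pair_le x y
  have hrel : ∀ x ∈ R \ ⋃₀ M, ∀ y ∈ R \ ⋃₀ M, P x y := by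
    intro x hx y hy
    by_contra hxy
    have hins : insert {x, y} M ∈ {M | M ⊆ G ∧ M.PairwiseDisjoint id} :=
      ⟨insert_subset ⟨x, hx.1, y, hy.1, hxy, rfl⟩ hM.1.1, hM.1.2.insert fun s hs _ =>
        disjoint_insert_left.2 ⟨fun h => hx.2 ⟨s, hs, h⟩,
          disjoint_singleton_left.2 fun h => hy.2 ⟨s, hs, h⟩⟩⟩
    exact hx.2 <|
      mem_sUnion_of_mem (mem_insert x {y}) (hM.2 hins (subset_insert _ _) (mem_insert _ _))
  have hRU : #↥(R \ ⋃₀ M) < #R := by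
    rcases (R \ ⋃₀ M).eq_empty_or_nonempty with h | ⟨z, hz⟩
    · rw [h, mk_eq_zero]
      exact aleph0_pos.trans_le hR
    · have hsub : R \ ⋃₀ M ⊆ {y ∈ R | P z y} := fun y hy => ⟨hy.1, hrel z hz y hy⟩
      exact (mk_le_mk_of_subset hsub).trans_lt (hP z hz.1)
  exact (le_mk_sdiff_add_mk R (⋃₀ M)).not_gt (add_lt_of_lt hR hRU hU)

def IsTransversal (P : Setoid α) (T : Set α) : Prop :=
  T.Pairwise (fun x y => ¬ P x y) ∧ ∀ x, ∃ t ∈ T, P x t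

theorem exists_isTransversal (P : Setoid α) : ∃ T, P.IsTransversal T := by
  refine ⟨range (Quotient.out : Quotient P → α), ?_,
    fun x => ⟨_, mem_range_self ⟦x⟧, P.symm (Quotient.mk_out x)⟩⟩
  rintro _ ⟨p, rfl⟩ _ ⟨q, rfl⟩ hne hpq
  exact hne (congrArg _ (Quotient.out_equiv_out.1 hpq))

namespace IsTransversal

variable {P : Setoid α} {T : Set α}

theorem exists_rel_notMem (hT : P.IsTransversal T) (hP : P ≠ ⊥) :
    ∃ a ∈ T, ∃ b ∉ T, P a b := by
  obtain ⟨x, y, hxy, hne⟩ : ∃ x y, P x y ∧ x ≠ y := by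
    by_contra! h
    exact hP (eq_bot_iff.2 fun x y hxy => h x y hxy)
  obtain ⟨t, ht, hxt⟩ := hT.2 x
  have notMem : ∀ z, P z t → z ≠ t → z ∉ T := fun z hzt hzt' hz => hT.1 hz ht hzt' hzt
  by_cases hx : x = t
  · subst hx
    exact ⟨x, ht, y, notMem y (P.symm hxy) hne.symm, hxy⟩
  · exact ⟨t, ht, x, notMem x hxt hx, P.symm hxt⟩

theorem eq_of_rel (hT : P.IsTransversal T) {x y : α} (hx : x ∈ T) (hy : y ∈ T) (h : P x y) :
    x = y :=
  by_contra fun hne => hT.1 hx hy hne h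

theorem two_pow_le_mk_complements_of_notMem (hT : P.IsTransversal T) {a b : α} (ha : a ∈ T)
    (hb : b ∉ T) (hab : P a b) : 2 ^ #↥(T \ {a}) ≤ #(complements P) := by
  have hdisj (S : Set α) : ({T \ S, insert b S} : Set (Set α)).PairwiseDisjoint id :=
    have h : Disjoint (T \ S) (insert b S) :=
      disjoint_insert_right.2 ⟨fun h => hb h.1, disjoint_sdiff_left⟩
    pairwise_pair.2 fun _ => ⟨h, h.symm⟩
  let Q (S : Set α) := ofPairwiseDisjoint _ (hdisj S)
  have hbQ {S : Set α} {t : α} (ht : t ∈ S) : Q S t b :=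
    ofPairwiseDisjoint_rel_of_mem (by simp) (mem_insert_of_mem b ht) (mem_insert b S)
  refine two_pow_le_mk_complements (fun S => Q S) (fun ⟨S, hS⟩ => ⟨?_, ?_⟩) ?_
  · refine inf_ofPairwiseDisjoint_eq_bot _ ?_
    rintro s (rfl | rfl)
    · exact hT.1.mono sdiff_subset
    · refine pairwise_insert.2 ⟨hT.1.mono (hS.trans sdiff_subset), fun t ht _ => ?_⟩
      have hat : a ≠ t := fun h => (hS ht).2 h.symm
      exact ⟨fun h => hat (hT.eq_of_rel ha (hS ht).1 (P.trans hab h)),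
        fun h => hat (hT.eq_of_rel ha (hS ht).1 (P.trans hab (P.symm h)))⟩
  · refine eq_top_of_forall_rel a fun x => ?_
    obtain ⟨t, ht, hxt⟩ := hT.2 x
    refine (P ⊔ Q S).trans (le_sup_left (b := Q S) hxt) ?_
    by_cases htS : t ∈ S
    · exact (P ⊔ Q S).trans (le_sup_right (a := P) (hbQ htS))
        (le_sup_left (b := Q S) (P.symm hab))
    · have haS : a ∈ T \ S := ⟨ha, fun h => (hS h).2 rfl⟩
      have hta : Q S t a := ofPairwiseDisjoint_rel_of_mem (s := T \ S) (by simp) ⟨ht, htS⟩ haS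
      exact le_sup_right (a := P) hta
  · rintro ⟨S, hS⟩ S' hle t htS
    obtain rfl | ⟨u, hu, htu, hbu⟩ := hle (hbQ htS)
    · exact absurd (hS htS).1 hb
    · rcases hu with rfl | rfl
      · exact absurd hbu.1 hb
      · exact (mem_insert_iff.1 htu).resolve_left fun h => hb (h ▸ (hS htS).1)

theorem two_pow_le_mk_complements_of_pairwiseDisjoint (hT : P.IsTransversal T) {M : Set (Set α)}
    (hM : M.PairwiseDisjoint id)
    (hMT : ∀ s ∈ M, s ⊆ Tᶜ ∧ s.Nontrivial ∧ s.Pairwise fun x y => ¬ P x y) :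
    2 ^ #M ≤ #(complements P) := by
  have hdisj (N : 𝒫 M) : (insert T N.1).PairwiseDisjoint id :=
    (hM.subset N.2).insert fun s hs _ => subset_compl_iff_disjoint_left.1 (hMT s (N.2 hs)).1
  let Q (N : 𝒫 M) := ofPairwiseDisjoint _ (hdisj N)
  refine two_pow_le_mk_complements Q (fun N => ⟨?_, ?_⟩) ?_
  · refine inf_ofPairwiseDisjoint_eq_bot _ ?_
    rintro s (rfl | hs)
    exacts [hT.1, (hMT s (N.2 hs)).2.2]
  · refine eq_top_iff.2 fun x y => ?_
    obtain ⟨s, hs, hxs⟩ := hT.2 x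
    obtain ⟨t, ht, hyt⟩ := hT.2 y
    exact (P ⊔ Q N).trans (le_sup_left (b := Q N) hxs) <| (P ⊔ Q N).trans
      (le_sup_right (a := P) (ofPairwiseDisjoint_rel_of_mem (mem_insert T _) hs ht))
      ((P ⊔ Q N).symm (le_sup_left (b := Q N) hyt))
  · rintro N N' hle s hs
    obtain ⟨x, hx, y, hy, hne⟩ := (hMT s (N.2 hs)).2.1
    have hxy : Q N x y := ofPairwiseDisjoint_rel_of_mem (mem_insert_of_mem T hs) hx hy
    obtain rfl | ⟨u, hu, hxu, -⟩ := hle hxy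
    · exact absurd rfl hne
    · rcases hu with rfl | hu
      · exact absurd hxu ((hMT s (N.2 hs)).1 hx)
      · exact hM.elim_set (N'.2 hu) (N.2 hs) x hxu hx ▸ hu

end IsTransversal

end Setoid

open Setoid in
theorem stmt_14_general {α : Type u} (hα : Cardinal.aleph0 ≤ Cardinal.mk α)
    (P : Setoid α) (hbot : P ≠ ⊥)
    (hblocks : ∀ a : α, Cardinal.mk {b : α | P a b} < Cardinal.mk α) :
    Cardinal.mk (complements P) = 2 ^ Cardinal.mk α := by
  refine le_antisymm ((mk_set_le _).trans (mk_le_two_pow hα)) ?_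
  have : Infinite α := infinite_iff.2 hα
  obtain ⟨T, hT⟩ := P.exists_isTransversal
  obtain ⟨a, ha, b, hb, hab⟩ := hT.exists_rel_notMem hbot
  by_cases hTα : #T < #α
  · have hTc : #↥Tᶜ = #α := mk_compl_of_infinite T hTα
    obtain ⟨M, hM, hMT, hle⟩ := P.exists_pairwiseDisjoint_nontrivial (R := Tᶜ) (hTc ▸ hα)
      fun x _ => (mk_le_mk_of_subset fun _ hy => hy.2).trans_lt (hTc ▸ hblocks x)
    calc 2 ^ #α = 2 ^ #↥Tᶜ := by rw [hTc]
      _ ≤ 2 ^ #M := power_le_power_left two_ne_zero hle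
      _ ≤ #(complements P) := hT.two_pow_le_mk_complements_of_pairwiseDisjoint hM hMT
  · have hTα : #T = #α := (mk_set_le T).antisymm (not_lt.1 hTα)
    rw [← hTα, ← mk_sdiff_singleton (hTα ▸ hα) a]
    exact hT.two_pow_le_mk_complements_of_notMem ha hb hab

/-- If `P` is a non-trivial partition of an infinite cardinal κ in which no block has
cardinality κ, then `P` has exactly `2^κ` complements. -/
theorem stmt_14 {α : Type u} (hα : Cardinal.aleph0 ≤ Cardinal.mk α)
    (P : Setoid α) (hbot : P ≠ ⊥) (htop : P ≠ ⊤)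
    (hblocks : ∀ a : α, Cardinal.mk {b : α | P a b} < Cardinal.mk α) :
    Cardinal.mk (complements P) = 2 ^ Cardinal.mk α :=
  stmt_14_general hα P hbot hblocks
end

section
/- Let κ be an infinite cardinal and P a partition of κ containing a block B of cardinality κ. Then the number of complements of P in the partition lattice of κ is exactly κ^λ, where λ = |κ \ B|. -/
open Cardinal

universe u

variable {α : Type u}

namespace Setoid

theorem exists_ker_eq_of_rel_imp_eq (Q : Setoid α) {s : Set α}
    (hs : ∀ x ∈ s, ∀ y ∈ s, Q x y → x = y) :
    ∃ r : α → α, ker r = Q ∧ ∀ x ∈ s, r x = x := by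
  classical
  let σ : Quotient Q → α := fun c => if h : ∃ x ∈ s, ⟦x⟧ = c then h.choose else c.out
  have hσ : ∀ c, ⟦σ c⟧ = c := fun c => by
    by_cases h : ∃ x ∈ s, ⟦x⟧ = c
    · simp only [σ, dif_pos h, h.choose_spec.2]
    · simp only [σ, dif_neg h, Quotient.out_eq]
  refine ⟨fun x => σ ⟦x⟧, ?_, fun x hx => ?_⟩
  · ext x y
    exact ker_def.trans ⟨fun h => Quotient.exact (by rw [← hσ ⟦x⟧, h, hσ]),
      fun h => congrArg σ (Quotient.sound h)⟩
  · have h : ∃ y ∈ s, ⟦y⟧ = (⟦x⟧ : Quotient Q) := ⟨x, hx, rfl⟩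
    have hmem : σ ⟦x⟧ ∈ s := by simpa only [σ, dif_pos h] using h.choose_spec.1
    exact hs _ hmem x hx (Quotient.exact (hσ ⟦x⟧))

theorem mk_rel_imp_eq_le_power (s : Set α) :
    #{Q : Setoid α | ∀ x ∈ s, ∀ y ∈ s, Q x y → x = y} ≤ #α ^ #(sᶜ : Set α) := by
  choose r hker hfix using fun Q : {Q : Setoid α | ∀ x ∈ s, ∀ y ∈ s, Q x y → x = y} =>
    exists_ker_eq_of_rel_imp_eq Q.1 Q.2
  rw [power_def]
  refine mk_le_of_injective (f := fun Q (x : ↥sᶜ) => r Q x) fun Q₁ Q₂ h => Subtype.ext ?_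
  have : r Q₁ = r Q₂ := funext fun x => by
    by_cases hx : x ∈ s
    · rw [hfix Q₁ x hx, hfix Q₂ x hx]
    · exact congrFun h ⟨x, hx⟩
  rw [← hker Q₁, ← hker Q₂, this]

open Classical in
noncomputable def collapseOnto (s : Set α) (f : ↥sᶜ → s) (x : α) : α :=
  if h : x ∈ s then x else f ⟨x, h⟩

theorem collapseOnto_of_mem {s : Set α} (f : ↥sᶜ → s) {x : α} (hx : x ∈ s) :
    collapseOnto s f x = x :=
  dif_pos hx

theorem collapseOnto_of_notMem {s : Set α} (f : ↥sᶜ → s) {x : α} (hx : x ∉ s) :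
    collapseOnto s f x = f ⟨x, hx⟩ :=
  dif_neg hx

theorem ker_collapseOnto_rel_self (s : Set α) (f : ↥sᶜ → s) (x : ↥sᶜ) :
    ker (collapseOnto s f) x (f x) := by
  rw [ker_def, collapseOnto_of_notMem f x.2, collapseOnto_of_mem f (f x).2]

theorem ker_collapseOnto_injective (s : Set α) :
    Function.Injective fun f : ↥sᶜ → s => ker (collapseOnto s f) := by
  intro f₁ f₂ h
  funext x
  have hx := ker_collapseOnto_rel_self s f₁ x
  rw [show ker (collapseOnto s f₁) = ker (collapseOnto s f₂) from h, ker_def,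
    collapseOnto_of_notMem f₂ x.2, collapseOnto_of_mem f₂ (f₁ x).2] at hx
  exact Subtype.ext hx.symm

theorem complements_subset_rel_imp_eq (P : Setoid α) (a : α) :
    complements P ⊆ {Q | ∀ x ∈ {b | P a b}, ∀ y ∈ {b | P a b}, Q x y → x = y} :=
  fun Q hQ x hx y hy hxy => by
    have : (P ⊓ Q) x y := inf_iff_and.2 ⟨P.trans (P.symm hx) hy, hxy⟩
    rwa [hQ.1, bot_def] at this

theorem ker_collapseOnto_mem_complements (P : Setoid α) (a : α)
    (f : ↥{b | P a b}ᶜ ↪ ↥{b | P a b}) :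
    ker (collapseOnto {b | P a b} f) ∈ complements P := by
  constructor
  · refine le_bot_iff.1 fun x y hxy => ?_
    obtain ⟨hP, hg⟩ := inf_iff_and.1 hxy
    rw [ker_def] at hg
    rw [bot_def]
    by_cases hx : P a x <;> by_cases hy : P a y
    · rwa [collapseOnto_of_mem (s := {b | P a b}) f hx,
        collapseOnto_of_mem (s := {b | P a b}) f hy] at hg
    · exact absurd (P.trans hx hP) hy
    · exact absurd (P.trans hy (P.symm hP)) hx
    · rw [collapseOnto_of_notMem (s := {b | P a b}) f hx,
        collapseOnto_of_notMem (s := {b | P a b}) f hy] at hg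
      exact congrArg Subtype.val (f.injective (Subtype.ext hg))
  · set J := P ⊔ ker (collapseOnto {b | P a b} f)
    -- every point is joined to `a`: by `P` inside the block, through its image under `f` outside it
    have ha : ∀ x, J a x := fun x => by
      by_cases hx : P a x
      · exact le_sup_left (a := P) hx
      · exact J.trans (le_sup_left (a := P) (f ⟨x, hx⟩).2)
          (J.symm (le_sup_right (a := P) (ker_collapseOnto_rel_self _ f ⟨x, hx⟩)))
    exact eq_top_iff.2 fun x y => J.trans (J.symm (ha x)) (ha y)

end Setoid

/-- If a partition `P` of an infinite cardinal κ has a block `B` (the class of `a`)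
of cardinality κ, then `P` has exactly `κ^λ` complements, where `λ = |κ \ B|`. -/
theorem stmt_15 {α : Type u} (hα : Cardinal.aleph0 ≤ Cardinal.mk α)
    (P : Setoid α) (a : α)
    (hB : Cardinal.mk {b : α | P a b} = Cardinal.mk α) :
    Cardinal.mk (complements P) = Cardinal.mk α ^ Cardinal.mk {b : α | ¬ P a b} := by
  have : Infinite {b : α | P a b} := infinite_iff.2 (hB ▸ hα)
  have hle : #↥{b : α | P a b}ᶜ ≤ #{b : α | P a b} := hB ▸ mk_set_le _
  refine le_antisymm ?_ ?_
  · calc #(complements P)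
        ≤ #{Q : Setoid α | ∀ x ∈ {b | P a b}, ∀ y ∈ {b | P a b}, Q x y → x = y} :=
          mk_le_mk_of_subset (Setoid.complements_subset_rel_imp_eq P a)
      _ ≤ #α ^ #↥{b : α | P a b}ᶜ := Setoid.mk_rel_imp_eq_le_power _
  · calc #α ^ #↥{b : α | P a b}ᶜ
        = #(↥{b : α | P a b}ᶜ ↪ {b : α | P a b}) := by
          rw [mk_embedding_eq_arrow_of_le hle, ← power_def, hB]
      _ ≤ #(complements P) :=
          mk_le_of_injective (f := fun f => ⟨_, Setoid.ker_collapseOnto_mem_complements P a f⟩)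
            fun f₁ f₂ h => DFunLike.coe_injective
              (Setoid.ker_collapseOnto_injective _ (congrArg Subtype.val h))
end

section
/- Let κ be an infinite cardinal and P a partition of κ containing at least two blocks of cardinality κ. Then P has exactly 2^κ complements in the partition lattice of κ. -/
open Cardinal Set

namespace Setoid

variable {α : Type*}

def matching (D : Set α) (e : α → α) (he : InjOn e D) (hD : MapsTo e D Dᶜ) : Setoid α where
  r x y := x = y ∨ (x ∈ D ∧ e x = y) ∨ (y ∈ D ∧ e y = x)
  iseqv := by
    refine ⟨fun _ => Or.inl rfl, fun h => by tauto, ?_⟩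
    intro x y z hxy hyz
    rcases hxy with rfl | ⟨hx, rfl⟩ | ⟨hy, rfl⟩
    · exact hyz
    · rcases hyz with rfl | ⟨hy, -⟩ | ⟨hz, hzy⟩
      · exact Or.inr (Or.inl ⟨hx, rfl⟩)
      · exact absurd hy (hD hx)
      · exact Or.inl (he hx hz hzy.symm)
    · rcases hyz with rfl | ⟨-, rfl⟩ | ⟨hz, rfl⟩
      · exact Or.inr (Or.inr ⟨hy, rfl⟩)
      · exact Or.inl rfl
      · exact absurd hy (hD hz)

section

variable {D : Set α} {e : α → α} {he : InjOn e D} {hD : MapsTo e D Dᶜ}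

theorem matching_rel_iff {x y : α} :
    matching D e he hD x y ↔ x = y ∨ (x ∈ D ∧ e x = y) ∨ (y ∈ D ∧ e y = x) :=
  Iff.rfl

theorem matching_rel_apply_iff {D₀ : Set α} (hout : MapsTo e D₀ D₀ᶜ) (hDD₀ : D ⊆ D₀) {x : α}
    (hx : x ∈ D₀) : matching D e he hD x (e x) ↔ x ∈ D := by
  have hex : e x ≠ x := fun h => hout hx (by rwa [h])
  have hexD : e x ∉ D := fun h => hout hx (hDD₀ h)
  simp [matching_rel_iff, hex.symm, hexD]

theorem inf_matching_eq_bot {P : Setoid α} (hP : ∀ x ∈ D, ¬ P x (e x)) :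
    P ⊓ matching D e he hD = ⊥ := by
  rw [_root_.eq_bot_iff, Setoid.le_def]
  rintro x y ⟨hxy, rfl | ⟨hx, rfl⟩ | ⟨hy, rfl⟩⟩
  · rfl
  · exact absurd hxy (hP x hx)
  · exact absurd (P.symm hxy) (hP y hy)

theorem sup_matching_eq_top {P : Setoid α} (c : α)
    (hc : ∀ x, P c x ∨ ∃ d ∈ D, P x d ∧ P c (e d)) : P ⊔ matching D e he hD = ⊤ := by
  set J := P ⊔ matching D e he hD
  have hPJ : P ≤ J := le_sup_left
  have hMJ : matching D e he hD ≤ J := le_sup_right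
  have hcJ : ∀ x, J c x := by
    intro x
    obtain hcx | ⟨d, hd, hxd, hcd⟩ := hc x
    · exact hPJ hcx
    · exact J.trans (hPJ hcd) (J.symm (J.trans (hPJ hxd) (hMJ (Or.inr (Or.inl ⟨hd, rfl⟩)))))
  exact eq_top_iff.mpr fun x y => J.trans (J.symm (hcJ x)) (hcJ y)

end

theorem mk_powerset_le_mk_complements {P : Setoid α} {c : α} {R B : Set α} {e : α → α}
    (he : InjOn e (R ∪ B)) (hec : MapsTo e (R ∪ B) {x | P c x}) (hc : ∀ x ∈ R ∪ B, ¬ P c x)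
    (hRB : Disjoint R B) (hR : ∀ x, P c x ∨ ∃ d ∈ R, P x d) :
    #(𝒫 B) ≤ #(complements P) := by
  have hout : MapsTo e (R ∪ B) (R ∪ B)ᶜ := fun x hx hex => hc _ hex (hec hx)
  have hsub (T : 𝒫 B) : R ∪ T ⊆ R ∪ B := union_subset_union_right R T.2
  let Q (T : 𝒫 B) : complements P :=
    ⟨matching (R ∪ T) e (he.mono (hsub T)) (hout.mono (hsub T) (compl_subset_compl.mpr (hsub T))),
      inf_matching_eq_bot fun x hx hxe => hc x (hsub T hx) (P.trans (hec (hsub T hx)) (P.symm hxe)),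
      sup_matching_eq_top c fun x =>
        (hR x).imp_right fun ⟨d, hd, hxd⟩ => ⟨d, Or.inl hd, hxd, hec (Or.inl hd)⟩⟩
  have hmem (T : 𝒫 B) {x : α} (hx : x ∈ B) : x ∈ (T : Set α) ↔ (Q T : Setoid α) x (e x) := by
    rw [matching_rel_apply_iff hout (hsub T) (Or.inr hx)]
    simp [hRB.notMem_of_mem_right hx]
  refine mk_le_of_injective (f := Q) fun T₁ T₂ h => ?_
  ext x
  by_cases hx : x ∈ B
  · rw [hmem T₁ hx, hmem T₂ hx, h]
  · exact iff_of_false (fun h' => hx (T₁.2 h')) (fun h' => hx (T₂.2 h'))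

end Setoid

theorem Cardinal.mk_setoid_le_two_pow {α : Type*} (hα : ℵ₀ ≤ #α) : #(Setoid α) ≤ 2 ^ #α := by
  have hinj : Function.Injective fun Q : Setoid α => {p : α × α | Q p.1 p.2} :=
    fun Q₁ Q₂ h => Setoid.ext fun x y => Set.ext_iff.mp h (x, y)
  calc #(Setoid α) ≤ #(Set (α × α)) := mk_le_of_injective hinj
    _ = 2 ^ #α := by rw [mk_set, mk_prod, lift_id, mul_eq_self hα]

theorem Cardinal.mk_sdiff_singleton_of_aleph0_le {α : Type*} {s : Set α} (hs : ℵ₀ ≤ #s) (x : α) :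
    #(s \ {x} : Set α) = #s := by
  have hinf : ℵ₀ ≤ #(s \ {x} : Set α) := by
    rw [aleph0_le_mk_iff, infinite_coe_iff] at hs ⊢
    exact hs.sdiff (finite_singleton x)
  refine le_antisymm (mk_le_mk_of_subset sdiff_subset) ?_
  simpa [add_one_eq hinf] using le_mk_sdiff_add_mk s {x}

theorem Set.exists_injOn_mapsTo_of_mk_le {α β : Type u} [Nonempty β] {s : Set α} {t : Set β}
    (h : #s ≤ #t) : ∃ f : α → β, InjOn f s ∧ MapsTo f s t := by
  classical
  obtain ⟨g⟩ := h
  refine ⟨fun x => if hx : x ∈ s then g ⟨x, hx⟩ else Classical.arbitrary β, ?_, ?_⟩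
  · intro x hx y hy hxy
    simp only [dif_pos hx, dif_pos hy] at hxy
    exact congrArg Subtype.val (g.injective (Subtype.val_injective hxy))
  · intro x hx
    simp only [dif_pos hx]
    exact (g _).2

theorem two_pow_le_mk_complements {α : Type u} (hα : ℵ₀ ≤ #α) {P : Setoid α} {a b : α}
    (hab : ¬ P a b) (ha : #{x | P a x} = #α) (hb : #{x | P b x} = #α) :
    2 ^ #α ≤ #(complements P) := by
  set R := range (Quotient.out : Quotient P → α) \ {x | P a x}
  set B := {x | P b x} \ {(Quotient.mk P b).out}
  have hRB : Disjoint R B := by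
    refine disjoint_left.mpr ?_
    rintro _ ⟨⟨q, rfl⟩, -⟩ ⟨hbq, hq⟩
    exact hq (congrArg Quotient.out ((Quotient.out_eq q).symm.trans (Quotient.sound (P.symm hbq))))
  have hRBa : ∀ x ∈ R ∪ B, ¬ P a x := by
    rintro x (⟨-, hx⟩ | ⟨hbx, -⟩) hax
    exacts [hx hax, hab (P.trans hax (P.symm hbx))]
  have hR (x : α) : P a x ∨ ∃ d ∈ R, P x d :=
    or_iff_not_imp_left.mpr fun hax => ⟨(Quotient.mk P x).out,
      ⟨mem_range_self _, fun h => hax (P.trans h (Quotient.mk_out x))⟩, P.symm (Quotient.mk_out x)⟩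
  have : Nonempty α := ⟨a⟩
  obtain ⟨e, he, hea⟩ := exists_injOn_mapsTo_of_mk_le (s := R ∪ B) (t := {x | P a x})
    (ha ▸ mk_set_le _)
  calc 2 ^ #α = #(𝒫 B) := by rw [mk_powerset, mk_sdiff_singleton_of_aleph0_le (hb ▸ hα), hb]
    _ ≤ #(complements P) := Setoid.mk_powerset_le_mk_complements he hea hRBa hRB hR

/-- If a partition `P` of an infinite cardinal κ has at least two distinct blocks of
cardinality κ, then `P` has exactly `2^κ` complements. -/
theorem stmt_16 {α : Type u} (hα : Cardinal.aleph0 ≤ Cardinal.mk α)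
    (P : Setoid α) (a b : α) (hab : ¬ P a b)
    (ha : Cardinal.mk {x : α | P a x} = Cardinal.mk α)
    (hb : Cardinal.mk {x : α | P b x} = Cardinal.mk α) :
    Cardinal.mk (complements P) = 2 ^ Cardinal.mk α :=
  le_antisymm ((mk_set_le _).trans (mk_setoid_le_two_pow hα))
    (two_pow_le_mk_complements hα hab ha hb)
end

section
/- Let κ be an infinite cardinal and P ∉ {⊥, ⊤} a partition of κ. Then κ ≤ |compl(P)| ≤ 2^κ, where compl(P) denotes the set of complements of P in the partition lattice of κ. -/
open Cardinal Set

theorem Cardinal.mk_setoid_le (α : Type*) : #(Setoid α) ≤ 2 ^ (#α * #α) := by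
  have hinj : Function.Injective fun Q : Setoid α => {p : α × α | Q p.1 p.2} := by
    intro Q R h
    ext x y
    exact Set.ext_iff.mp h (x, y)
  simpa [mk_set] using mk_le_of_injective hinj

namespace Setoid

variable {α : Type*}

open Classical in
/-- For disjoint `A` and `S`: the partition with blocks `A`, `S` and singletons. -/
noncomputable def twoBlocks (A S : Set α) : Setoid α :=
  ker fun y => if y ∈ A then none else if y ∈ S then some none else some (some y)

theorem twoBlocks_iff {A S : Set α} (hAS : Disjoint A S) {u v : α} :
    twoBlocks A S u v ↔ u = v ∨ (u ∈ A ∧ v ∈ A) ∨ (u ∈ S ∧ v ∈ S) := by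
  have hA : ∀ {y}, y ∈ A → y ∉ S := fun hy => Set.disjoint_left.mp hAS hy
  rw [twoBlocks, ker_def]
  split_ifs <;> grind

theorem inf_twoBlocks_eq_bot {P : Setoid α} {A S : Set α} (hAS : Disjoint A S)
    (hA : A.Pairwise fun u v => ¬ P u v) (hS : S.Pairwise fun u v => ¬ P u v) :
    P ⊓ twoBlocks A S = ⊥ := by
  refine le_antisymm (fun u v huv => ?_) bot_le
  obtain ⟨hP, hQ⟩ := inf_iff_and.mp huv
  by_contra hne
  rcases (twoBlocks_iff hAS).mp hQ with h | ⟨hu, hv⟩ | ⟨hu, hv⟩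
  · exact hne h
  · exact hA hu hv hne hP
  · exact hS hu hv hne hP

variable (P : Setoid α)

def transversal : Set α := range (Quotient.out : Quotient P → α)

noncomputable def complementOfPair (x p : α) : Setoid α :=
  twoBlocks {x, p} (P.transversal \ {(Quotient.mk P x).out})

variable {P}

theorem out_mk_eq_of_mem_transversal {x : α} (hx : x ∈ P.transversal) :
    (Quotient.mk P x).out = x := by
  obtain ⟨q, rfl⟩ := hx
  rw [Quotient.out_eq]

theorem pairwise_transversal : P.transversal.Pairwise fun u v => ¬ P u v := by
  rintro _ ⟨q, rfl⟩ _ ⟨q', rfl⟩ hne hP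
  exact hne (Quotient.out_equiv_out.mp hP ▸ rfl)

theorem disjoint_pair_transversal_diff {x p : α} (hp : p ∉ P.transversal) :
    Disjoint ({x, p} : Set α) (P.transversal \ {(Quotient.mk P x).out}) := by
  rw [Set.disjoint_left]
  rintro y (rfl | rfl) ⟨hy, hne⟩
  · exact hne (out_mk_eq_of_mem_transversal hy).symm
  · exact hp hy

theorem complementOfPair_iff {x p u v : α} (hp : p ∉ P.transversal) :
    P.complementOfPair x p u v ↔ u = v ∨ (u ∈ ({x, p} : Set α) ∧ v ∈ ({x, p} : Set α)) ∨
      (u ∈ P.transversal \ {(Quotient.mk P x).out} ∧ v ∈ P.transversal \ {(Quotient.mk P x).out}) :=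
  twoBlocks_iff (disjoint_pair_transversal_diff hp)

theorem inf_complementOfPair_eq_bot {x p : α} (hxp : ¬ P x p) (hp : p ∉ P.transversal) :
    P ⊓ P.complementOfPair x p = ⊥ := by
  refine inf_twoBlocks_eq_bot (disjoint_pair_transversal_diff hp) ?_
    (pairwise_transversal.mono sdiff_subset)
  rw [Set.pairwise_pair]
  exact fun _ => ⟨hxp, fun h => hxp (P.symm h)⟩

theorem sup_complementOfPair_eq_top {x p : α} (hxp : ¬ P x p) (hp : p ∉ P.transversal) :
    P ⊔ P.complementOfPair x p = ⊤ := by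
  set R := P ⊔ P.complementOfPair x p
  have hPR : ∀ {u v}, P u v → R u v := fun h => (le_sup_left : P ≤ R) h
  have hQR : ∀ {u v}, P.complementOfPair x p u v → R u v := fun h => (le_sup_right : _ ≤ R) h
  set t : α → α := fun y => (Quotient.mk P y).out
  have ht_mem : ∀ y, t y ≠ t x → t y ∈ P.transversal \ {t x} := fun y h => ⟨⟨_, rfl⟩, h⟩
  have htp : t p ≠ t x := fun h => hxp (Quotient.eq.mp (Quotient.out_inj.mp h).symm)
  have hx : R x (t p) :=
    R.trans (hQR ((complementOfPair_iff hp).mpr (.inr (.inl ⟨.inl rfl, .inr rfl⟩)))) (hPR (P.symm (Quotient.mk_out p)))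
  have key : ∀ y, R y (t p) := by
    intro y
    by_cases hy : t y = t x
    · exact R.trans (hPR (Quotient.eq.mp (Quotient.out_inj.mp hy))) hx
    · exact R.trans (hPR (P.symm (Quotient.mk_out y)))
        (hQR ((complementOfPair_iff hp).mpr (.inr (.inr ⟨ht_mem y hy, ht_mem p htp⟩))))
  exact eq_top_iff.mpr fun u v => R.trans (key u) (R.symm (key v))

theorem notMem_transversal_of_rel {p a : α} (hpa : P p a) (hne : p ≠ (Quotient.mk P a).out) :
    p ∉ P.transversal := fun hp =>
  hne ((out_mk_eq_of_mem_transversal hp).symm.trans (by rw [Quotient.sound hpa]))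

theorem complementOfPair_injOn (r : α) :
    InjOn (fun xp : α × α => P.complementOfPair xp.1 xp.2)
      {xp | ¬ P xp.1 r ∧ P xp.2 r ∧ xp.2 ∉ P.transversal} := by
  rintro ⟨x, p⟩ ⟨hx, hp, hpT⟩ ⟨x', p'⟩ ⟨hx', hp', hpT'⟩ h
  have hxp : P.complementOfPair x' p' x p := by
    rw [← show P.complementOfPair x p = P.complementOfPair x' p' from h]
    exact (complementOfPair_iff hpT).mpr (.inr (.inl ⟨.inl rfl, .inr rfl⟩))
  rcases (complementOfPair_iff hpT').mp hxp with rfl | ⟨hxm, hpm⟩ | ⟨_, hpm⟩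
  · exact absurd hp hx
  · rcases hxm with rfl | rfl <;> rcases hpm with rfl | rfl <;> first | rfl | contradiction
  · exact absurd hpm.1 hpT

theorem complementOfPair_mem_complements {x p : α} (hxp : ¬ P x p) (hp : p ∉ P.transversal) :
    P.complementOfPair x p ∈ complements P :=
  ⟨inf_complementOfPair_eq_bot hxp hp, sup_complementOfPair_eq_top hxp hp⟩

theorem mk_le_mk_complements (hα : ℵ₀ ≤ #α) {a b x₀ : α}
    (hab : P a b) (hne : a ≠ b) (hx₀ : ¬ P x₀ a) : #α ≤ #(complements P) := by
  classical
  set r := (Quotient.mk P a).out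
  obtain ⟨p₀, hp₀a, hp₀r⟩ : ∃ p, P p a ∧ p ≠ r := by
    by_cases har : a = r
    · exact ⟨b, P.symm hab, fun h => hne (har.trans h.symm)⟩
    · exact ⟨a, P.refl a, har⟩
  set I := {xp : α × α | ¬ P xp.1 a ∧ P xp.2 a ∧ xp.2 ∉ P.transversal}
  set g : α → α × α := fun z => if P z a then (x₀, z) else (z, p₀)
  set s : Set α := {r, x₀}ᶜ
  have hg_maps : MapsTo g s I := by
    intro z hz
    simp only [s, mem_compl_iff, mem_insert_iff, mem_singleton_iff, not_or] at hz
    by_cases hza : P z a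
    · simp only [g, if_pos hza]
      exact ⟨hx₀, hza, notMem_transversal_of_rel hza hz.1⟩
    · simp only [g, if_neg hza]
      exact ⟨hza, hp₀a, notMem_transversal_of_rel hp₀a hp₀r⟩
  have hg_inj : InjOn g s := by
    intro z hz z' hz' h
    simp only [s, mem_compl_iff, mem_insert_iff, mem_singleton_iff, not_or] at hz hz'
    by_cases hza : P z a <;> by_cases hza' : P z' a <;>
      simp_all [g]
  have hF_maps : MapsTo (fun xp : α × α => P.complementOfPair xp.1 xp.2) I (complements P) :=
    fun xp hxp => complementOfPair_mem_complements
      (fun h => hxp.1 (P.trans h hxp.2.1)) hxp.2.2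
  have : Infinite α := infinite_iff.mpr hα
  calc #α = #s := (mk_compl_of_infinite _ ((toFinite _).lt_aleph0.trans_le hα)).symm
    _ = #((_ ∘ g) '' s) :=
      (mk_image_eq_of_injOn _ _ ((complementOfPair_injOn a).comp hg_inj hg_maps)).symm
    _ ≤ #(complements P) := mk_le_mk_of_subset (hF_maps.comp hg_maps).image_subset

theorem mk_complements_le (hα : ℵ₀ ≤ #α) :
    #(complements P) ≤ 2 ^ #α :=
  calc #(complements P) ≤ #(Setoid α) := mk_subtype_le _
    _ ≤ 2 ^ (#α * #α) := mk_setoid_le α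
    _ = 2 ^ #α := by rw [mul_eq_self hα]

end Setoid

/-- For an infinite cardinal κ and any non-trivial partition `P` of κ,
`κ ≤ |compl(P)| ≤ 2^κ`. -/
theorem stmt_17 {α : Type u} (hα : Cardinal.aleph0 ≤ Cardinal.mk α)
    (P : Setoid α) (hbot : P ≠ ⊥) (htop : P ≠ ⊤) :
    Cardinal.mk α ≤ Cardinal.mk (complements P) ∧
      Cardinal.mk (complements P) ≤ 2 ^ Cardinal.mk α := by
  obtain ⟨a, b, hab, hne⟩ : ∃ a b, P a b ∧ a ≠ b := by
    by_contra! h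
    exact hbot (le_antisymm (fun x y hxy => h x y hxy) bot_le)
  obtain ⟨x₀, hx₀⟩ : ∃ x, ¬ P x a := by
    by_contra! h
    exact htop (Setoid.eq_top_iff.mpr fun u v => P.trans (h u) (P.symm (h v)))
  exact ⟨Setoid.mk_le_mk_complements hα hab hne hx₀, Setoid.mk_complements_le hα⟩
end

section
/- For every cardinal κ > 2 (finite or infinite), the partition lattice of κ is not orthocomplemented: there is no map P ↦ P⊥ on partitions of κ satisfying P ∧ P⊥ = ⊥, P ∨ P⊥ = ⊤, (P ∧ Q)⊥ = P⊥ ∨ Q⊥, and (P⊥)⊥ = P. -/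
/-!
An orthocomplementation is an order-reversing involution, so it maps the coatoms of the
partition lattice injectively to its atoms. Fixing a point `z`, the coatoms include the
two-block partitions `S | Sᶜ` with `S` a nonempty set avoiding `z`, at least `2 ^ (κ - 1) - 1`
of them, while an atom is determined by the one pair it joins, so there are at most
`κ choose 2` atoms. This is impossible once `κ ≥ 4` (by Cantor's theorem when `κ` is infinite).
For `κ = 3` the nontrivial partitions are the three partitions `{w} | rest`, and
`P ⊓ P⊥ = ⊥` makes `P ↦ P⊥` a fixed-point-free involution of them, which an odd set
cannot carry.
-/

open Cardinal Function

universe u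

theorem antitone_of_map_inf_eq_sup {L : Type*} [Lattice L] {f : L → L}
    (h : ∀ a b, f (a ⊓ b) = f a ⊔ f b) : Antitone f := fun a b hab => by
  rw [← inf_eq_left.2 hab, h]
  exact le_sup_right

theorem IsCoatom.isAtom_of_antitone_of_involutive {L : Type*} [PartialOrder L] [BoundedOrder L]
    {f : L → L} (hf : Antitone f) (hinv : Involutive f) {a : L} (ha : IsCoatom a) :
    IsAtom (f a) :=
  let e : L ≃o Lᵒᵈ :=
    { toEquiv := hinv.toPerm.trans OrderDual.toDual
      map_rel_iff' := fun {a b} => by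
        change f b ≤ f a ↔ a ≤ b
        exact ⟨fun h => by simpa only [hinv _] using hf h, fun h => hf h⟩ }
  (e.isCoatom_iff a).2 ha

theorem mk_coatoms_le_mk_atoms {L : Type u} [PartialOrder L] [BoundedOrder L]
    {f : L → L} (hf : Antitone f) (hinv : Involutive f) :
    #{a : L // IsCoatom a} ≤ #{a : L // IsAtom a} :=
  mk_le_of_injective (f := fun a => ⟨f a, a.2.isAtom_of_antitone_of_involutive hf hinv⟩)
    fun _ _ h => Subtype.ext (hinv.injective (congrArg Subtype.val h))

theorem Nat.succ_choose_two_add_one_lt_two_pow {n : ℕ} (hn : 3 ≤ n) :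
    (n + 1).choose 2 + 1 < 2 ^ n := by
  induction n, hn using Nat.le_induction with
  | base => decide
  | succ n _ ih =>
    have hchoose : (n + 1 + 1).choose 2 = (n + 1).choose 2 + (n + 1) := by
      rw [Nat.choose_succ_succ', Nat.choose_one_right, add_comm]
    have := n.lt_two_pow_self
    rw [hchoose, pow_succ]
    omega

theorem Cardinal.mk_not_isDiag_add_one_lt_two_pow {α : Type u} (h : 3 < #α) (z : α) :
    #{p : Sym2 α // ¬p.IsDiag} + 1 < 2 ^ #{x // x ≠ z} := by
  classical
  cases finite_or_infinite α
  · have := Fintype.ofFinite α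
    obtain ⟨n, hn⟩ := Nat.exists_eq_add_one_of_ne_zero (Fintype.card_pos_iff.2 ⟨z⟩).ne'
    rw [mk_fintype, hn] at h
    have hn3 : 3 < n + 1 := by exact_mod_cast h
    rw [mk_fintype, mk_fintype, Sym2.card_subtype_not_diag, Fintype.card_subtype_compl,
      Fintype.card_subtype_eq, hn, Nat.add_sub_cancel]
    exact_mod_cast Nat.succ_choose_two_add_one_lt_two_pow (by omega)
  · have hα := aleph0_le_mk α
    calc #{p : Sym2 α // ¬p.IsDiag} + 1 ≤ #(Sym2 α) + 1 := by gcongr; exact mk_subtype_le _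
      _ ≤ #(α × α) + 1 := by gcongr; exact mk_le_of_surjective Sym2.mk_surjective
      _ = #{x // x ≠ z} := by
        rw [mk_prod, lift_id, mul_eq_self hα, add_one_eq hα]
        exact (mk_compl_of_infinite {z} (by simpa using one_lt_aleph0.trans_le hα)).symm
      _ < 2 ^ #{x // x ≠ z} := cantor _

namespace Setoid

variable {α : Type u}

theorem exists_rel_ne_of_ne_bot_s19 {P : Setoid α} (h : P ≠ ⊥) : ∃ x y, x ≠ y ∧ P x y := by
  by_contra! hP
  exact h (le_bot_iff.1 fun {x y} hxy => by_contra fun hne => hP x y hne hxy)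

theorem eq_of_isAtom_of_rel {P Q : Setoid α} (hP : IsAtom P) (hQ : IsAtom Q) {x y : α}
    (hxy : x ≠ y) (hPxy : P x y) (hQxy : Q x y) : P = Q := by
  have hne : P ⊓ Q ≠ ⊥ := fun h => by
    have hrel := inf_iff_and.2 ⟨hPxy, hQxy⟩
    rw [h] at hrel
    exact hxy hrel
  exact ((hP.le_iff_eq hne).1 inf_le_left).symm.trans ((hQ.le_iff_eq hne).1 inf_le_right)

theorem ker_mem_apply {S : Set α} {x y : α} : ker (· ∈ S) x y ↔ (x ∈ S ↔ y ∈ S) :=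
  ker_def.trans ⟨iff_of_eq, propext⟩

theorem ker_mem_injOn (z : α) : Set.InjOn (fun S : Set α => ker (· ∈ S)) {S | z ∉ S} :=
  fun S (hS : z ∉ S) S' (hS' : z ∉ S') h => Set.ext fun x => by
    simpa [ker_mem_apply, hS, hS', not_iff_not] using congrArg (fun P : Setoid α => P x z) h

theorem isCoatom_ker_mem {S : Set α} {a z : α} (ha : a ∈ S) (hz : z ∉ S) :
    IsCoatom (ker (· ∈ S)) := by
  refine ⟨fun h => hz ((ker_mem_apply.1 (eq_top_iff.1 h a z)).1 ha), fun Q hlt => ?_⟩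
  obtain ⟨b, c, hbc, hS⟩ : ∃ b c, Q b c ∧ ¬(b ∈ S ↔ c ∈ S) := by
    by_contra! h
    exact hlt.not_ge fun {b c} hbc => ker_mem_apply.2 (h b c hbc)
  have hQb (x : α) : Q x b := by
    have hle {x y : α} (h : x ∈ S ↔ y ∈ S) : Q x y := hlt.le (ker_mem_apply.2 h)
    by_cases hx : (x ∈ S ↔ b ∈ S)
    · exact hle hx
    · exact Q.trans (hle (by tauto)) (Q.symm hbc)
  exact eq_top_iff.2 fun x y => Q.trans (hQb x) (Q.symm (hQb y))

theorem two_pow_le_mk_coatoms_add_one (z : α) :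
    2 ^ #{x // x ≠ z} ≤ #{P : Setoid α // IsCoatom P} + 1 := by
  let F (T : Set {x // x ≠ z}) : Setoid α := ker (· ∈ Subtype.val '' T)
  have hz (T : Set {x // x ≠ z}) : z ∉ Subtype.val '' T := fun ⟨x, _, hx⟩ => x.2 hx
  have hF : Injective F := fun T T' h =>
    Subtype.val_injective.image_injective (ker_mem_injOn z (hz T) (hz T') h)
  have hrange : Set.range F ⊆ insert ⊤ {P | IsCoatom P} := by
    rintro _ ⟨T, rfl⟩
    rcases T.eq_empty_or_nonempty with rfl | ⟨a, ha⟩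
    · exact Or.inl (eq_top_iff.2 fun x y => by simp [F])
    · exact Or.inr (isCoatom_ker_mem (Set.mem_image_of_mem _ ha) (hz T))
  calc 2 ^ #{x // x ≠ z} = #(Set.range F) := by rw [mk_range_eq F hF, mk_set]
    _ ≤ #(insert ⊤ {P : Setoid α | IsCoatom P} : Set (Setoid α)) := mk_le_mk_of_subset hrange
    _ ≤ #{P : Setoid α // IsCoatom P} + 1 := mk_insert_le

theorem exists_eq_ker_mem_singleton [Fintype α] (h3 : Fintype.card α = 3) {P : Setoid α}
    (hbot : P ≠ ⊥) (htop : P ≠ ⊤) : ∃ w, P = ker (· ∈ ({w} : Set α)) := by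
  classical
  obtain ⟨u, v, huv, hPuv⟩ := exists_rel_ne_of_ne_bot_s19 hbot
  obtain ⟨w, hw⟩ : ∃ w, ({u, v} : Finset α)ᶜ = {w} := by
    rw [← Finset.card_eq_one, Finset.card_compl, Finset.card_pair huv, h3]
  have hall (a : α) : a = u ∨ a = v ∨ a = w := by
    by_cases ha : a ∈ ({u, v} : Finset α)
    · rw [Finset.mem_insert, Finset.mem_singleton] at ha
      tauto
    · rw [← Finset.mem_compl, hw, Finset.mem_singleton] at ha
      exact Or.inr (Or.inr ha)
  have hwuv : w ≠ u ∧ w ≠ v := by simpa using Finset.ext_iff.1 hw w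
  have hPwu : ¬P w u := fun hwu => htop <| eq_top_iff.2 fun a b => by
    have hrel (a : α) : P a u := by
      rcases hall a with rfl | rfl | rfl
      exacts [P.refl a, P.symm hPuv, hwu]
    exact P.trans (hrel a) (P.symm (hrel b))
  have hPwv : ¬P w v := fun hwv => hPwu (P.trans hwv (P.symm hPuv))
  have hPuw : ¬P u w := fun h => hPwu (P.symm h)
  have hPvw : ¬P v w := fun h => hPwv (P.symm h)
  refine ⟨w, Setoid.ext fun a b => ?_⟩
  rw [ker_mem_apply]
  rcases hall a with rfl | rfl | rfl <;> rcases hall b with rfl | rfl | rfl <;>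
    simp [hPuv, P.symm hPuv, hPwu, hPwv, hPuw, hPvw, hwuv.1.symm, hwuv.2.symm]

theorem mk_atoms_le : #{P : Setoid α // IsAtom P} ≤ #{p : Sym2 α // ¬p.IsDiag} := by
  have hpair (P : {P : Setoid α // IsAtom P}) : ∃ x y, x ≠ y ∧ P.1 x y :=
    exists_rel_ne_of_ne_bot_s19 P.2.ne_bot
  choose x y hxy hP using hpair
  refine mk_le_of_injective (f := fun P => ⟨s(x P, y P), Sym2.mk_isDiag_iff.not.2 (hxy P)⟩)
    fun P Q h => Subtype.ext ?_
  have hQ : Q.1 (x P) (y P) := by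
    rcases Sym2.eq_iff.1 (congrArg Subtype.val h) with ⟨hx, hy⟩ | ⟨hx, hy⟩
    · rw [hx, hy]
      exact hP Q
    · rw [hx, hy]
      exact Q.1.symm (hP Q)
  exact eq_of_isAtom_of_rel P.2 Q.2 (hxy P) (hP P) hQ

theorem mk_le_three_of_antitone_of_involutive {f : Setoid α → Setoid α} (hf : Antitone f)
    (hinv : Involutive f) : #α ≤ 3 := by
  by_contra! h
  obtain ⟨z⟩ := mk_ne_zero_iff.1 (ne_bot_of_gt h)
  refine (mk_not_isDiag_add_one_lt_two_pow h z).not_ge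
    ((two_pow_le_mk_coatoms_add_one z).trans ?_)
  gcongr
  exact (mk_coatoms_le_mk_atoms hf hinv).trans mk_atoms_le

theorem mk_ne_three_of_inf_eq_bot_of_involutive {oc : Setoid α → Setoid α}
    (hmeet : ∀ P, P ⊓ oc P = ⊥) (hinv : Involutive oc) : #α ≠ 3 := by
  intro h3
  obtain ⟨_, hcard⟩ := mk_eq_nat_iff_fintype.1 h3
  let p (w : α) : Setoid α := ker (· ∈ ({w} : Set α))
  have hp_top (w : α) : p w ≠ ⊤ := by
    obtain ⟨t, ht, -⟩ := exists_ne_ne_of_three_le h3.ge w w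
    exact (isCoatom_ker_mem (Set.mem_singleton w) ht).1
  have hp_bot (w : α) : p w ≠ ⊥ := fun h => by
    obtain ⟨t, ht, -⟩ := exists_ne_ne_of_three_le h3.ge w w
    obtain ⟨t', ht', htt'⟩ := exists_ne_ne_of_three_le h3.ge w t
    have hrel : p w t t' := ker_mem_apply.2 (by simp [ht, ht'])
    rw [h] at hrel
    exact htt' hrel.symm
  have hp_inj : Injective p := fun w w' h => by
    obtain ⟨t, htw, htw'⟩ := exists_ne_ne_of_three_le h3.ge w w'
    exact Set.singleton_injective (ker_mem_injOn t htw htw' h)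
  have hoc_top : oc ⊤ = ⊥ := by simpa using hmeet ⊤
  have hσ (w : α) : ∃ w', oc (p w) = p w' := by
    refine exists_eq_ker_mem_singleton hcard (fun h => hp_top w ?_) (fun h => hp_bot w ?_)
    · rw [← hinv (p w), h, ← hoc_top, hinv]
    · rw [← hinv (p w), h, hoc_top]
  choose σ hσ using hσ
  have hσ_inv : Involutive σ := fun w => hp_inj (by rw [← hσ, ← hσ, hinv])
  obtain ⟨w, hw⟩ := Equiv.Perm.exists_fixed_point_of_prime (p := 2) (n := 1)
    (σ := hσ_inv.toPerm) (by rw [hcard]; decide) (by ext w; simp [sq, hσ_inv w])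
  apply hp_bot w
  rw [← hmeet (p w), hσ w, show σ w = w from hw, inf_idem]

end Setoid

/-- For every cardinal κ > 2 (finite or infinite), the partition lattice of κ is not
orthocomplemented: there is no map `P ↦ P⊥` with `P ⊓ P⊥ = ⊥`, `P ⊔ P⊥ = ⊤`,
`(P ⊓ Q)⊥ = P⊥ ⊔ Q⊥` and `(P⊥)⊥ = P`. -/
theorem stmt_19 {α : Type u} (hα : 2 < Cardinal.mk α) :
    ¬ ∃ oc : Setoid α → Setoid α,
      (∀ P, P ⊓ oc P = ⊥) ∧ (∀ P, P ⊔ oc P = ⊤) ∧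
      (∀ P Q, oc (P ⊓ Q) = oc P ⊔ oc Q) ∧ (∀ P, oc (oc P) = P) := by
  rintro ⟨oc, hmeet, -, hdm, hinv⟩
  have hle :=
    Setoid.mk_le_three_of_antitone_of_involutive (antitone_of_map_inf_eq_sup hdm) hinv
  have hne := Setoid.mk_ne_three_of_inf_eq_bot_of_involutive hmeet hinv
  obtain ⟨n, -, hn⟩ := exists_nat_eq_of_le_nat hle
  rw [hn] at hα hle hne
  norm_cast at hα hle hne
  omega
end
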